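/- arXiv:2503.14440 — 6 statements merged into one kernel-verified Lean document; each statement's English description precedes it below -/
import Mathlib

section
/- There exists a universal constant C > 0 such that for every 1-periodic function f ∈ C¹(ℝ;ℝ) and every 1-periodic measurable function K : ℝ → [0,∞) which is integrable on [0,1] with ∫₀¹ K(s) ds ≥ 2π, one has ∫₀¹ f(s)² ds ≤ C(1 + ∫₀¹ K(s) ds)(∫₀¹ K(s)f(s)² ds + ∫₀¹ f'(s)² ds). -/
open MeasureTheory Set

noncomputable section

private lemma aux_abs_intervalIntegral_le {h : ℝ → ℝ} (hc : Continuous h) {t s : ℝ}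
    (ht : t ∈ Icc (0:ℝ) 1) (hs : s ∈ Icc (0:ℝ) 1) :
    |∫ u in t..s, h u| ≤ ∫ u in (0:ℝ)..1, |h u| := by
  have hint : IntervalIntegrable (fun u => |h u|) volume 0 1 :=
    (hc.abs).intervalIntegrable 0 1
  have habs : ∀ a b : ℝ, a ∈ Icc (0:ℝ) 1 → b ∈ Icc (0:ℝ) 1 → a ≤ b →
      |∫ u in a..b, h u| ≤ ∫ u in (0:ℝ)..1, |h u| := by
    intro a b ha hb hab
    calc |∫ u in a..b, h u| ≤ ∫ u in a..b, |h u| :=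
          intervalIntegral.abs_integral_le_integral_abs hab
      _ ≤ ∫ u in (0:ℝ)..1, |h u| :=
          intervalIntegral.integral_mono_interval ha.1 hab hb.2
            (Filter.Eventually.of_forall fun x => abs_nonneg _) hint
  rcases le_total t s with hts | hst
  · exact habs t s ht hs hts
  · rw [intervalIntegral.integral_symm, abs_neg]
    exact habs s t hs ht hst

/-- weighted Poincaré-type inequality on the circle, with weight of
mass at least `2π`. -/
theorem weighted_poincare_circle :
    ∃ C : ℝ, 0 < C ∧
      ∀ (f K : ℝ → ℝ),
        ContDiff ℝ 1 f → Function.Periodic f 1 →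
        Measurable K → Function.Periodic K 1 → (∀ s, 0 ≤ K s) →
        IntegrableOn K (Icc 0 1) →
        2 * Real.pi ≤ ∫ s in (0:ℝ)..1, K s →
        (∫ s in (0:ℝ)..1, (f s) ^ 2) ≤
          C * (1 + ∫ s in (0:ℝ)..1, K s) *
            ((∫ s in (0:ℝ)..1, K s * (f s) ^ 2) + ∫ s in (0:ℝ)..1, (deriv f s) ^ 2) := by
  refine ⟨4, by norm_num, ?_⟩
  intro f K hf hfper hKmeas hKper hKnonneg hKint hKmass
  set M : ℝ := ∫ s in (0:ℝ)..1, K s with hM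
  have hπ : (0:ℝ) < Real.pi := Real.pi_pos
  have hMpos : 0 < M := lt_of_lt_of_le (by positivity) hKmass
  have hfc : Continuous f := hf.continuous
  have hf'c : Continuous (deriv f) := (hf.continuous_deriv le_rfl)
  -- FTC setup
  have hderiv : ∀ x : ℝ, HasDerivAt (fun u => f u ^ 2) (2 * f x * deriv f x) x := by
    intro x
    have := ((hf.differentiable one_ne_zero) x).hasDerivAt
    have h2 := this.fun_pow 2
    simpa [mul_comm, mul_assoc, mul_left_comm] using h2
  set A : ℝ := ∫ u in (0:ℝ)..1, |2 * f u * deriv f u| with hA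
  have hAnonneg : 0 ≤ A :=
    intervalIntegral.integral_nonneg (by norm_num) (fun u _ => abs_nonneg _)
  -- key pointwise estimate
  have hkey : ∀ s ∈ Icc (0:ℝ) 1, ∀ t ∈ Icc (0:ℝ) 1, f s ^ 2 ≤ f t ^ 2 + A := by
    intro s hs t ht
    have hftc : (∫ u in t..s, 2 * f u * deriv f u) = f s ^ 2 - f t ^ 2 :=
      intervalIntegral.integral_eq_sub_of_hasDerivAt (fun x _ => hderiv x)
        ((continuous_const.mul hfc |>.mul hf'c).intervalIntegrable t s)
    have hb : |f s ^ 2 - f t ^ 2| ≤ A := by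
      rw [← hftc]
      exact aux_abs_intervalIntegral_le (continuous_const.mul hfc |>.mul hf'c) ht hs
    nlinarith [abs_le.mp hb]
  -- integrability facts
  have hKIoc : IntegrableOn K (Ioc (0:ℝ) 1) := hKint.mono_set Ioc_subset_Icc_self
  obtain ⟨B, hB⟩ : ∃ B, ∀ x ∈ Icc (0:ℝ) 1, |f x ^ 2| ≤ B := by
    obtain ⟨B, hB⟩ := (isCompact_Icc (a := (0:ℝ)) (b := 1)).exists_bound_of_continuousOn
      ((hfc.pow 2).continuousOn)
    exact ⟨B, fun x hx => hB x hx⟩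
  have hKf2int : IntegrableOn (fun t => K t * f t ^ 2) (Ioc (0:ℝ) 1) := by
    have h0 : Integrable (fun t => f t ^ 2 * K t) (volume.restrict (Ioc (0:ℝ) 1)) := by
      apply Integrable.bdd_mul (f := fun t => f t ^ 2) (g := K) (c := |B|) hKIoc
        ((hfc.pow 2).aestronglyMeasurable.restrict)
      filter_upwards [ae_restrict_mem measurableSet_Ioc] with x hx
      exact le_trans (hB x (Ioc_subset_Icc_self hx)) (le_abs_self B)
    simpa [mul_comm, IntegrableOn] using h0
  have hKf2int' : IntervalIntegrable (fun t => K t * f t ^ 2) volume 0 1 := by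
    rw [intervalIntegrable_iff_integrableOn_Ioc_of_le (by norm_num)]
    simpa [mul_comm] using hKf2int
  have hKint' : IntervalIntegrable K volume 0 1 := by
    rw [intervalIntegrable_iff_integrableOn_Ioc_of_le (by norm_num)]
    exact hKIoc
  -- weighted average: for s ∈ [0,1], M * f s ^ 2 ≤ ∫ K f² + A * M
  have havg : ∀ s ∈ Icc (0:ℝ) 1,
      M * f s ^ 2 ≤ (∫ t in (0:ℝ)..1, K t * f t ^ 2) + A * M := by
    intro s hs
    have h1 : (∫ t in (0:ℝ)..1, K t * f s ^ 2) ≤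
        ∫ t in (0:ℝ)..1, (K t * f t ^ 2 + K t * A) := by
      apply intervalIntegral.integral_mono_on (by norm_num)
        (hKint'.mul_const _)
        (hKf2int'.add (hKint'.mul_const _))
      intro t ht
      have := hkey s hs t ht
      nlinarith [hKnonneg t]
    rw [intervalIntegral.integral_mul_const] at h1
    rw [intervalIntegral.integral_add hKf2int' (hKint'.mul_const _),
      intervalIntegral.integral_mul_const] at h1
    linarith [h1]
  -- integrate over s
  have hIle : (∫ s in (0:ℝ)..1, f s ^ 2) ≤
      ((∫ t in (0:ℝ)..1, K t * f t ^ 2) + A * M) / M := by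
    have h2 : (∫ s in (0:ℝ)..1, f s ^ 2) ≤
        ∫ s in (0:ℝ)..1, (((∫ t in (0:ℝ)..1, K t * f t ^ 2) + A * M) / M) := by
      apply intervalIntegral.integral_mono_on (by norm_num)
        ((hfc.pow 2).intervalIntegrable 0 1) (intervalIntegrable_const)
      intro s hs
      have := havg s hs
      rw [le_div_iff₀ hMpos]
      simp only [Pi.pow_apply]
      linarith
    simpa using h2
  -- bound A
  have hAle : A ≤ (1/2) * (∫ s in (0:ℝ)..1, f s ^ 2) + 2 * ∫ s in (0:ℝ)..1, (deriv f s) ^ 2 := by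
    have h3 : A ≤ ∫ u in (0:ℝ)..1, ((1/2) * f u ^ 2 + 2 * (deriv f u) ^ 2) := by
      apply intervalIntegral.integral_mono_on (by norm_num)
        (((continuous_const.mul hfc |>.mul hf'c).abs).intervalIntegrable 0 1)
        ((continuous_const.mul (hfc.pow 2) |>.add
          (continuous_const.mul (hf'c.pow 2))).intervalIntegrable 0 1)
      intro u _
      have h4 : |2 * f u * deriv f u| ≤ (1/2) * f u ^ 2 + 2 * (deriv f u) ^ 2 := by
        rcases abs_cases (2 * f u * deriv f u) with ⟨h5, _⟩ | ⟨h5, _⟩ <;> rw [h5] <;> nlinarith [sq_nonneg (f u - 2 * deriv f u), sq_nonneg (f u + 2 * deriv f u)]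
      exact h4
    rw [intervalIntegral.integral_add ((by exact (hfc.pow 2).intervalIntegrable 0 1 : IntervalIntegrable (fun u => f u ^ 2) volume 0 1).const_mul _)
      ((by exact (hf'c.pow 2).intervalIntegrable 0 1 : IntervalIntegrable (fun u => deriv f u ^ 2) volume 0 1).const_mul _),
      intervalIntegral.integral_const_mul, intervalIntegral.integral_const_mul] at h3
    exact h3
  -- wrap up
  set I : ℝ := ∫ s in (0:ℝ)..1, f s ^ 2
  set J : ℝ := ∫ t in (0:ℝ)..1, K t * f t ^ 2
  set D : ℝ := ∫ s in (0:ℝ)..1, (deriv f s) ^ 2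
  have hJnonneg : 0 ≤ J :=
    intervalIntegral.integral_nonneg (by norm_num)
      (fun t _ => mul_nonneg (hKnonneg t) (sq_nonneg _))
  have hDnonneg : 0 ≤ D :=
    intervalIntegral.integral_nonneg (by norm_num) (fun t _ => sq_nonneg _)
  have hIle2 : I ≤ J / M + A := by
    have he : (J + A * M) / M = J / M + A := by
      field_simp
    rw [he] at hIle
    exact hIle
  have hJM : J / M ≤ J / (2 * Real.pi) := by
    apply div_le_div_of_nonneg_left hJnonneg (by positivity) hKmass
  have hπ4 : J / (2 * Real.pi) ≤ J := by
    rw [div_le_iff₀ (by positivity)]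
    nlinarith [Real.pi_gt_three]
  have hfin : I ≤ 4 * (J + D) := by linarith
  have hmul : 4 * (J + D) ≤ 4 * (1 + M) * (J + D) := by nlinarith
  linarith
end
end

section
/- There exists a universal constant C > 0 such that the following holds. Let X ∈ C⁴([0,1];ℝ³) be inextensible (|X'(s)| = 1 for all s) with X''(0) = X''(1) = 0 and X'''(0) = X'''(1) = 0, and let λ ∈ C¹([0,1];ℝ) with λ(0) = λ(1) = 0. Set Z := X''' − λX', E := (1/2)∫₀¹|X''(s)|² ds, and D := ∫₀¹|Z'(s)|² ds. Then ‖X''''‖_{L²} ≤ C(D^{1/2}(1 + E^{1/2}) + E^{5/2}). -/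
open MeasureTheory Set intervalIntegral
open scoped RealInnerProductSpace

noncomputable section

abbrev E3 : Type := EuclideanSpace ℝ (Fin 3)

def L2norm {F : Type*} [NormedAddCommGroup F] (f : ℝ → F) : ℝ :=
  Real.sqrt (∫ s in (0:ℝ)..1, ‖f s‖ ^ 2)

lemma cs_int (f g : ℝ → ℝ) (hf : Continuous f) (hg : Continuous g) :
    ∫ s in (0:ℝ)..1, f s * g s ≤
      Real.sqrt (∫ s in (0:ℝ)..1, f s ^ 2) * Real.sqrt (∫ s in (0:ℝ)..1, g s ^ 2) := by
  set A := ∫ s in (0:ℝ)..1, f s ^ 2 with hA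
  set B := ∫ s in (0:ℝ)..1, g s ^ 2 with hB
  set C := ∫ s in (0:ℝ)..1, f s * g s with hC
  have hint : ∀ t : ℝ, (0:ℝ) ≤ t ^ 2 * A + 2 * t * C + B := by
    intro t
    have h1 : (0:ℝ) ≤ ∫ s in (0:ℝ)..1, (t * f s + g s) ^ 2 :=
      integral_nonneg (by norm_num) (fun s _ => sq_nonneg _)
    have h2 : ∀ s : ℝ, (t * f s + g s) ^ 2
        = t ^ 2 * f s ^ 2 + 2 * t * (f s * g s) + g s ^ 2 := by intro s; ring
    rw [intervalIntegral.integral_congr (fun s _ => h2 s)] at h1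
    rw [intervalIntegral.integral_add, intervalIntegral.integral_add,
      intervalIntegral.integral_const_mul, intervalIntegral.integral_const_mul] at h1
    · exact h1
    · exact (continuous_const.mul (hf.pow 2)).intervalIntegrable _ _
    · exact (continuous_const.mul (hf.mul hg)).intervalIntegrable _ _
    · exact ((continuous_const.mul (hf.pow 2)).add (continuous_const.mul (hf.mul hg))).intervalIntegrable _ _
    · exact (hg.pow 2).intervalIntegrable _ _
  have hA0 : 0 ≤ A := integral_nonneg (by norm_num) (fun s _ => sq_nonneg _)
  have hB0 : 0 ≤ B := integral_nonneg (by norm_num) (fun s _ => sq_nonneg _)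
  rcases eq_or_lt_of_le hA0 with h | h
  · -- A = 0 : C must be 0
    have hC0 : C = 0 := by
      by_contra hne
      have h1 := hint (-(B + 1) / (2 * C))
      rw [← h] at h1
      have h2 : 2 * (-(B + 1) / (2 * C)) * C = -(B + 1) := by field_simp
      rw [h2] at h1
      linarith [h1]
    rw [hC0]; positivity
  · have hC2 : C ^ 2 ≤ A * B := by
      have h1 := hint (-C / A)
      have h2 : (-C / A) ^ 2 * A + 2 * (-C / A) * C + B = B - C ^ 2 / A := by
        field_simp; ring
      rw [h2] at h1
      have h3 : C ^ 2 / A ≤ B := by linarith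
      calc C ^ 2 = C ^ 2 / A * A := by field_simp
        _ ≤ B * A := mul_le_mul_of_nonneg_right h3 (le_of_lt h)
        _ = A * B := mul_comm _ _
    calc C ≤ |C| := le_abs_self _
      _ = Real.sqrt (C ^ 2) := (Real.sqrt_sq_eq_abs C).symm
      _ ≤ Real.sqrt (A * B) := Real.sqrt_le_sqrt hC2
      _ = Real.sqrt A * Real.sqrt B := Real.sqrt_mul hA0 B

lemma L2_combo (a c : ℝ → ℝ) (ha : Continuous a) (hc : Continuous c)
    (p q : ℝ) (hp : 0 ≤ p) (hq : 0 ≤ q) :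
    Real.sqrt (∫ s in (0:ℝ)..1, (p * a s + q * c s) ^ 2) ≤
      p * Real.sqrt (∫ s in (0:ℝ)..1, a s ^ 2) +
        q * Real.sqrt (∫ s in (0:ℝ)..1, c s ^ 2) := by
  set A := ∫ s in (0:ℝ)..1, a s ^ 2 with hA
  set B := ∫ s in (0:ℝ)..1, c s ^ 2 with hB
  have hA0 : 0 ≤ A := integral_nonneg (by norm_num) (fun s _ => sq_nonneg _)
  have hB0 : 0 ≤ B := integral_nonneg (by norm_num) (fun s _ => sq_nonneg _)
  have hM := cs_int a c ha hc
  have hexp : ∫ s in (0:ℝ)..1, (p * a s + q * c s) ^ 2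
      = p ^ 2 * A + 2 * p * q * (∫ s in (0:ℝ)..1, a s * c s) + q ^ 2 * B := by
    have h2 : ∀ s : ℝ, (p * a s + q * c s) ^ 2
        = p ^ 2 * a s ^ 2 + 2 * p * q * (a s * c s) + q ^ 2 * c s ^ 2 := by intro s; ring
    rw [intervalIntegral.integral_congr (fun s _ => h2 s)]
    rw [intervalIntegral.integral_add, intervalIntegral.integral_add,
      intervalIntegral.integral_const_mul, intervalIntegral.integral_const_mul,
      intervalIntegral.integral_const_mul]
    · exact (continuous_const.mul (ha.pow 2)).intervalIntegrable _ _
    · exact (continuous_const.mul (ha.mul hc)).intervalIntegrable _ _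
    · exact ((continuous_const.mul (ha.pow 2)).add
        (continuous_const.mul (ha.mul hc))).intervalIntegrable _ _
    · exact (continuous_const.mul (hc.pow 2)).intervalIntegrable _ _
  have hle : ∫ s in (0:ℝ)..1, (p * a s + q * c s) ^ 2
      ≤ (p * Real.sqrt A + q * Real.sqrt B) ^ 2 := by
    rw [hexp]
    have e1 : Real.sqrt A ^ 2 = A := Real.sq_sqrt hA0
    have e2 : Real.sqrt B ^ 2 = B := Real.sq_sqrt hB0
    nlinarith [mul_le_mul_of_nonneg_left hM
      (mul_nonneg (mul_nonneg (by norm_num : (0:ℝ) ≤ 2) hp) hq)]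
  calc Real.sqrt (∫ s in (0:ℝ)..1, (p * a s + q * c s) ^ 2)
      ≤ Real.sqrt ((p * Real.sqrt A + q * Real.sqrt B) ^ 2) := Real.sqrt_le_sqrt hle
    _ = p * Real.sqrt A + q * Real.sqrt B := by
        rw [Real.sqrt_sq (by positivity)]

lemma sup_bound {E : Type*} [NormedAddCommGroup E] [NormedSpace ℝ E] [CompleteSpace E]
    (g : ℝ → E) (g' : ℝ → E) (hd : ∀ s, HasDerivAt g (g' s) s)
    (hc : Continuous g') (h0 : g 0 = 0) {s : ℝ} (hs : s ∈ Icc (0:ℝ) 1) :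
    ‖g s‖ ≤ Real.sqrt (∫ u in (0:ℝ)..1, ‖g' u‖ ^ 2) := by
  have hftc : ∫ u in (0:ℝ)..s, g' u = g s - g 0 :=
    integral_eq_sub_of_hasDerivAt (fun u _ => hd u) ((hc.intervalIntegrable _ _))
  have h1 : ‖g s‖ ≤ ∫ u in (0:ℝ)..s, ‖g' u‖ := by
    rw [show g s = ∫ u in (0:ℝ)..s, g' u by rw [hftc, h0, sub_zero]]
    exact intervalIntegral.norm_integral_le_integral_norm hs.1
  have h2 : ∫ u in (0:ℝ)..s, ‖g' u‖ ≤ ∫ u in (0:ℝ)..1, ‖g' u‖ :=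
    integral_mono_interval le_rfl hs.1 hs.2
      (Filter.Eventually.of_forall (fun u => norm_nonneg _))
      ((hc.norm).intervalIntegrable _ _)
  have h3 : ∫ u in (0:ℝ)..1, ‖g' u‖ ≤ Real.sqrt (∫ u in (0:ℝ)..1, ‖g' u‖ ^ 2) := by
    have := cs_int (fun u => ‖g' u‖) (fun _ => 1) hc.norm continuous_const
    simpa using this
  linarith

set_option maxHeartbeats 16000000 in
/-- the energy dissipation controls the fourth derivative of a
free-end inextensible filament. -/
theorem dissipation_controls_Xssss_free_end :
    ∃ C : ℝ, 0 < C ∧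
      ∀ (X : ℝ → E3) (lam : ℝ → ℝ),
        ContDiff ℝ 4 X → ContDiff ℝ 1 lam →
        (∀ s ∈ Icc (0:ℝ) 1, ‖deriv X s‖ = 1) →
        iteratedDeriv 2 X 0 = 0 → iteratedDeriv 2 X 1 = 0 →
        iteratedDeriv 3 X 0 = 0 → iteratedDeriv 3 X 1 = 0 →
        lam 0 = 0 → lam 1 = 0 →
        ∀ (E D : ℝ),
          E = (1/2) * ∫ s in (0:ℝ)..1, ‖iteratedDeriv 2 X s‖ ^ 2 →
          D = ∫ s in (0:ℝ)..1,
              ‖deriv (fun u => iteratedDeriv 3 X u - lam u • deriv X u) s‖ ^ 2 →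
          L2norm (iteratedDeriv 4 X) ≤
            C * (Real.sqrt D * (1 + Real.sqrt E) + E ^ ((5:ℝ)/2)) := by
  refine ⟨30, by norm_num, ?_⟩
  intro X lam hX hlam hunit h20 h21 h30 h31 hl0 hl1 E D hE hD
  -- the derivative tower
  set X1 : ℝ → E3 := deriv X with hX1def
  set X2 : ℝ → E3 := deriv X1 with hX2def
  set X3 : ℝ → E3 := deriv X2 with hX3def
  set X4 : ℝ → E3 := deriv X3 with hX4def
  have hit1 : iteratedDeriv 1 X = X1 := iteratedDeriv_one
  have hit2 : iteratedDeriv 2 X = X2 := by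
    show iteratedDeriv (1 + 1) X = X2
    rw [iteratedDeriv_succ, hit1]
  have hit3 : iteratedDeriv 3 X = X3 := by
    show iteratedDeriv (2 + 1) X = X3
    rw [iteratedDeriv_succ, hit2]
  have hit4 : iteratedDeriv 4 X = X4 := by
    show iteratedDeriv (3 + 1) X = X4
    rw [iteratedDeriv_succ, hit3]
  -- smoothness peeling
  have h4 : ContDiff ℝ ((3:ℕ) + 1) X := by exact_mod_cast hX
  rw [contDiff_succ_iff_deriv] at h4
  have hC3 : ContDiff ℝ ((2:ℕ) + 1) X1 := by exact_mod_cast h4.2.2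
  rw [contDiff_succ_iff_deriv] at hC3
  have hC2 : ContDiff ℝ ((1:ℕ) + 1) X2 := by exact_mod_cast hC3.2.2
  rw [contDiff_succ_iff_deriv] at hC2
  have hC1 : ContDiff ℝ ((0:ℕ) + 1) X3 := by exact_mod_cast hC2.2.2
  rw [contDiff_succ_iff_deriv] at hC1
  have cont1 : Continuous X1 := (hC3.1).continuous
  have cont2 : Continuous X2 := (hC2.1).continuous
  have cont3 : Continuous X3 := (hC1.1).continuous
  have cont4 : Continuous X4 := hC1.2.2.continuous
  have hd0 : ∀ s, HasDerivAt X (X1 s) s := fun s => (h4.1 s).hasDerivAt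
  have hd1 : ∀ s, HasDerivAt X1 (X2 s) s := fun s => (hC3.1 s).hasDerivAt
  have hd2 : ∀ s, HasDerivAt X2 (X3 s) s := fun s => (hC2.1 s).hasDerivAt
  have hd3 : ∀ s, HasDerivAt X3 (X4 s) s := fun s => (hC1.1 s).hasDerivAt
  have hlam1 : Differentiable ℝ lam ∧ Continuous (deriv lam) :=
    contDiff_one_iff_deriv.mp hlam
  have contlam : Continuous lam := hlam.continuous
  have contlam' : Continuous (deriv lam) := hlam1.2
  have hdlam : ∀ s, HasDerivAt lam (deriv lam s) s := fun s => (hlam1.1 s).hasDerivAt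
  -- Z and its derivative
  set Z : ℝ → E3 := fun u => X3 u - lam u • X1 u with hZdef
  set dZ : ℝ → E3 := fun s => X4 s - (lam s • X2 s + deriv lam s • X1 s) with hdZdef
  have hdZ : ∀ s, HasDerivAt Z (dZ s) s := fun s =>
    (hd3 s).sub ((hdlam s).smul (hd1 s))
  have contdZ : Continuous dZ :=
    cont4.sub ((contlam.smul cont2).add (contlam'.smul cont1))
  have hderivZ : deriv Z = dZ := deriv_eq hdZ
  -- boundary values
  have h20' : X2 0 = 0 := by rw [← hit2]; exact h20
  have h21' : X2 1 = 0 := by rw [← hit2]; exact h21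
  have h30' : X3 0 = 0 := by rw [← hit3]; exact h30
  have hunit' : ∀ s ∈ Icc (0:ℝ) 1, ‖X1 s‖ = 1 := hunit
  -- rewrite D
  have hZfun : (fun u => iteratedDeriv 3 X u - lam u • deriv X u) = Z := by
    funext u; rw [hit3]
  rw [hZfun, hderivZ] at hD
  rw [hit2] at hE
  -- basic quantities
  obtain ⟨b, hbdef⟩ : ∃ b : ℝ, b = Real.sqrt (∫ s in (0:ℝ)..1, ‖X2 s‖ ^ 2) := ⟨_, rfl⟩
  obtain ⟨T, hTdef⟩ : ∃ T : ℝ, T = Real.sqrt (∫ s in (0:ℝ)..1, ‖X3 s‖ ^ 2) := ⟨_, rfl⟩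
  obtain ⟨N, hNdef⟩ : ∃ N : ℝ, N = Real.sqrt (∫ s in (0:ℝ)..1, ‖X4 s‖ ^ 2) := ⟨_, rfl⟩
  obtain ⟨sqD, hsqDdef⟩ : ∃ q : ℝ, q = Real.sqrt D := ⟨_, rfl⟩
  have hb0 : 0 ≤ b := hbdef ▸ Real.sqrt_nonneg _
  have hT0 : 0 ≤ T := hTdef ▸ Real.sqrt_nonneg _
  have hN0 : 0 ≤ N := hNdef ▸ Real.sqrt_nonneg _
  have hsqD0 : 0 ≤ sqD := hsqDdef ▸ Real.sqrt_nonneg _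
  have hIb : ∫ s in (0:ℝ)..1, ‖X2 s‖ ^ 2 = b ^ 2 := by
    rw [hbdef]
    exact (Real.sq_sqrt (intervalIntegral.integral_nonneg (by norm_num)
      (fun s _ => sq_nonneg _))).symm
  have hIT : ∫ s in (0:ℝ)..1, ‖X3 s‖ ^ 2 = T ^ 2 := by
    rw [hTdef]
    exact (Real.sq_sqrt (intervalIntegral.integral_nonneg (by norm_num)
      (fun s _ => sq_nonneg _))).symm
  have hE0 : 0 ≤ E := by
    rw [hE]
    have : 0 ≤ ∫ s in (0:ℝ)..1, ‖X2 s‖ ^ 2 :=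
      intervalIntegral.integral_nonneg (by norm_num) (fun s _ => sq_nonneg _)
    linarith
  have hD0 : 0 ≤ D := by
    rw [hD]; exact intervalIntegral.integral_nonneg (by norm_num) (fun s _ => sq_nonneg _)
  -- Z vanishes at 0 and is controlled by sqrt D
  have hZ0 : Z 0 = 0 := by
    simp only [hZdef, h30', hl0, zero_smul, sub_zero]
  have hZsup : ∀ s ∈ Icc (0:ℝ) 1, ‖Z s‖ ≤ sqD := by
    intro s hs
    rw [hsqDdef, hD]
    exact sup_bound Z dZ hdZ contdZ hZ0 hs
  -- orthogonality relations on the open interval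
  have horth : ∀ s ∈ Ioo (0:ℝ) 1, ⟪X1 s, X2 s⟫ = 0 := by
    intro s hs
    have hev : (fun u => ⟪X1 u, X1 u⟫) =ᶠ[nhds s] (fun _ => (1:ℝ)) := by
      filter_upwards [Ioo_mem_nhds hs.1 hs.2] with u hu
      rw [real_inner_self_eq_norm_sq, hunit' u (Ioo_subset_Icc_self hu)]; norm_num
    have hder : HasDerivAt (fun u => ⟪X1 u, X1 u⟫)
        (⟪X1 s, X2 s⟫ + ⟪X2 s, X1 s⟫) s := (hd1 s).inner ℝ (hd1 s)
    have h0 : deriv (fun u => ⟪X1 u, X1 u⟫) s = 0 := by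
      rw [hev.deriv_eq]; exact deriv_const s 1
    have h1 := hder.deriv
    rw [h0] at h1
    have h2 := real_inner_comm (X1 s) (X2 s)
    linarith
  have horth3 : ∀ s ∈ Ioo (0:ℝ) 1, ⟪X1 s, X3 s⟫ = -‖X2 s‖ ^ 2 := by
    intro s hs
    have hev : (fun u => ⟪X1 u, X2 u⟫) =ᶠ[nhds s] (fun _ => (0:ℝ)) := by
      filter_upwards [Ioo_mem_nhds hs.1 hs.2] with u hu
      exact horth u hu
    have hder : HasDerivAt (fun u => ⟪X1 u, X2 u⟫)
        (⟪X1 s, X3 s⟫ + ⟪X2 s, X2 s⟫) s := (hd1 s).inner ℝ (hd2 s)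
    have h0 : deriv (fun u => ⟪X1 u, X2 u⟫) s = 0 := by
      rw [hev.deriv_eq]; exact deriv_const s 0
    have h1 := hder.deriv
    rw [h0, real_inner_self_eq_norm_sq] at h1
    linarith
  -- lambda identity
  have hinner1Z : ∀ s ∈ Ioo (0:ℝ) 1, ⟪X1 s, Z s⟫ = -‖X2 s‖ ^ 2 - lam s := by
    intro s hs
    have h1 : ⟪X1 s, Z s⟫ = ⟪X1 s, X3 s⟫ - lam s * ⟪X1 s, X1 s⟫ := by
      simp only [hZdef, inner_sub_right, real_inner_smul_right]
    rw [h1, horth3 s hs, real_inner_self_eq_norm_sq,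
      hunit' s (Ioo_subset_Icc_self hs)]
    ring
  have hlameq : ∀ s ∈ Ioo (0:ℝ) 1, lam s = -‖X2 s‖ ^ 2 - ⟪X1 s, Z s⟫ := by
    intro s hs
    have := hinner1Z s hs
    linarith
  -- lambda' identity
  have hlamd : ∀ s ∈ Ioo (0:ℝ) 1,
      deriv lam s = -3 * ⟪X2 s, Z s⟫ - ⟪X1 s, dZ s⟫ := by
    intro s hs
    have hev : lam =ᶠ[nhds s]
        (fun u => -⟪X2 u, X2 u⟫ - ⟪X1 u, Z u⟫) := by
      filter_upwards [Ioo_mem_nhds hs.1 hs.2] with u hu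
      rw [hlameq u hu, real_inner_self_eq_norm_sq]
    have hder : HasDerivAt (fun u => -⟪X2 u, X2 u⟫ - ⟪X1 u, Z u⟫)
        (-(⟪X2 s, X3 s⟫ + ⟪X3 s, X2 s⟫) - (⟪X1 s, dZ s⟫ + ⟪X2 s, Z s⟫)) s :=
      (((hd2 s).inner ℝ (hd2 s)).neg).sub ((hd1 s).inner ℝ (hdZ s))
    have h23 : ⟪X2 s, X3 s⟫ = ⟪X2 s, Z s⟫ := by
      have hX3eq : X3 s = Z s + lam s • X1 s := by
        simp only [hZdef]; abel
      have h0 := horth s hs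
      rw [real_inner_comm] at h0
      rw [hX3eq, inner_add_right, real_inner_smul_right, h0]
      ring
    have h32 : ⟪X3 s, X2 s⟫ = ⟪X2 s, Z s⟫ := by
      rw [real_inner_comm]; exact h23
    rw [hev.deriv_eq, hder.deriv, h23, h32]
    ring
  -- Agmon-type bound
  have hAg : ∀ s ∈ Icc (0:ℝ) 1, ‖X2 s‖ ^ 2 ≤ 2 * b * T := by
    intro s hs
    have hderφ : ∀ u, HasDerivAt (fun v => ⟪X2 v, X2 v⟫)
        (⟪X2 u, X3 u⟫ + ⟪X3 u, X2 u⟫) u := fun u => (hd2 u).inner ℝ (hd2 u)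
    have hcont : Continuous (fun u => ⟪X2 u, X3 u⟫ + ⟪X3 u, X2 u⟫) :=
      (cont2.inner cont3).add (cont3.inner cont2)
    have hftc : ∫ u in (0:ℝ)..s, (⟪X2 u, X3 u⟫ + ⟪X3 u, X2 u⟫)
        = ⟪X2 s, X2 s⟫ - ⟪X2 0, X2 0⟫ :=
      intervalIntegral.integral_eq_sub_of_hasDerivAt (fun u _ => hderφ u)
        (hcont.intervalIntegrable _ _)
    have h1 : ‖X2 s‖ ^ 2 = ∫ u in (0:ℝ)..s, (⟪X2 u, X3 u⟫ + ⟪X3 u, X2 u⟫) := by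
      rw [hftc, h20', real_inner_self_eq_norm_sq]
      simp
    have h2 : ∫ u in (0:ℝ)..s, (⟪X2 u, X3 u⟫ + ⟪X3 u, X2 u⟫)
        ≤ ∫ u in (0:ℝ)..s, 2 * (‖X2 u‖ * ‖X3 u‖) := by
      apply intervalIntegral.integral_mono_on hs.1
        (hcont.intervalIntegrable _ _)
        ((continuous_const.mul (cont2.norm.mul cont3.norm)).intervalIntegrable _ _)
      intro u _
      have ha := real_inner_le_norm (X2 u) (X3 u)
      have hb := real_inner_le_norm (X3 u) (X2 u)
      show ⟪X2 u, X3 u⟫ + ⟪X3 u, X2 u⟫ ≤ 2 * (‖X2 u‖ * ‖X3 u‖)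
      nlinarith [ha, hb]
    have h3 : ∫ u in (0:ℝ)..s, 2 * (‖X2 u‖ * ‖X3 u‖)
        ≤ ∫ u in (0:ℝ)..1, 2 * (‖X2 u‖ * ‖X3 u‖) := by
      apply intervalIntegral.integral_mono_interval le_rfl hs.1 hs.2
      · exact Filter.Eventually.of_forall fun u => by positivity
      · exact (continuous_const.mul (cont2.norm.mul cont3.norm)).intervalIntegrable _ _
    have h4 : ∫ u in (0:ℝ)..1, 2 * (‖X2 u‖ * ‖X3 u‖) ≤ 2 * (b * T) := by
      rw [intervalIntegral.integral_const_mul]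
      have h := cs_int (fun u => ‖X2 u‖) (fun u => ‖X3 u‖) cont2.norm cont3.norm
      rw [← hbdef, ← hTdef] at h
      nlinarith
    calc ‖X2 s‖ ^ 2 = _ := h1
      _ ≤ _ := h2
      _ ≤ _ := h3
      _ ≤ 2 * (b * T) := h4
      _ = 2 * b * T := by ring
  -- integration by parts : T^2 ≤ b * N
  have hIBP : T ^ 2 ≤ b * N := by
    have hderψ : ∀ u, HasDerivAt (fun v => ⟪X2 v, X3 v⟫)
        (⟪X2 u, X4 u⟫ + ⟪X3 u, X3 u⟫) u := fun u => (hd2 u).inner ℝ (hd3 u)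
    have hcont24 : Continuous fun u => ⟪X2 u, X4 u⟫ := cont2.inner cont4
    have hcont33 : Continuous fun u => ⟪X3 u, X3 u⟫ := cont3.inner cont3
    have hftc : ∫ u in (0:ℝ)..1, (⟪X2 u, X4 u⟫ + ⟪X3 u, X3 u⟫)
        = ⟪X2 1, X3 1⟫ - ⟪X2 0, X3 0⟫ :=
      intervalIntegral.integral_eq_sub_of_hasDerivAt (fun u _ => hderψ u)
        ((hcont24.add hcont33).intervalIntegrable _ _)
    rw [h20', h21'] at hftc
    simp only [inner_zero_left, sub_zero] at hftc
    have hsplit : (∫ u in (0:ℝ)..1, ⟪X2 u, X4 u⟫)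
        + ∫ u in (0:ℝ)..1, ⟪X3 u, X3 u⟫ = 0 := by
      rw [← intervalIntegral.integral_add (hcont24.intervalIntegrable _ _)
        (hcont33.intervalIntegrable _ _)]
      exact hftc
    have hT2 : T ^ 2 = ∫ u in (0:ℝ)..1, ⟪X3 u, X3 u⟫ := by
      rw [← hIT]
      exact (intervalIntegral.integral_congr
        (fun u _ => (real_inner_self_eq_norm_sq (X3 u)))).symm
    have hbound : -(∫ u in (0:ℝ)..1, ⟪X2 u, X4 u⟫) ≤ b * N := by
      have h1 : ∫ u in (0:ℝ)..1, (-⟪X2 u, X4 u⟫) ≤ ∫ u in (0:ℝ)..1, ‖X2 u‖ * ‖X4 u‖ := by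
        apply intervalIntegral.integral_mono_on (by norm_num)
          (hcont24.neg.intervalIntegrable _ _)
          ((cont2.norm.mul cont4.norm).intervalIntegrable _ _)
        intro u _
        have h1 := abs_real_inner_le_norm (X2 u) (X4 u)
        have h2 : -⟪X2 u, X4 u⟫ ≤ |⟪X2 u, X4 u⟫| := neg_le_abs _
        show -⟪X2 u, X4 u⟫ ≤ ‖X2 u‖ * ‖X4 u‖
        linarith
      have h2 := cs_int (fun u => ‖X2 u‖) (fun u => ‖X4 u‖) cont2.norm cont4.norm
      rw [← hbdef, ← hNdef] at h2
      rw [intervalIntegral.integral_neg] at h1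
      linarith
    rw [hT2]
    linarith
  -- pointwise bound for X4 on the open interval
  have hptw : ∀ s ∈ Ioo (0:ℝ) 1,
      ‖X4 s‖ ≤ 2 * ‖dZ s‖ + (4 * sqD + 2 * b * T) * ‖X2 s‖ := by
    intro s hs
    have hsIcc := Ioo_subset_Icc_self hs
    have hX4eq : X4 s = dZ s + (lam s • X2 s + deriv lam s • X1 s) := by
      simp only [hdZdef]; abel
    have htri : ‖X4 s‖ ≤ ‖dZ s‖ + (|lam s| * ‖X2 s‖ + |deriv lam s| * ‖X1 s‖) := by
      rw [hX4eq]
      refine le_trans (norm_add_le _ _) ?_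
      gcongr
      refine le_trans (norm_add_le _ _) ?_
      rw [norm_smul, norm_smul, Real.norm_eq_abs, Real.norm_eq_abs]
    have hX1n : ‖X1 s‖ = 1 := hunit' s hsIcc
    have hZn : ‖Z s‖ ≤ sqD := hZsup s hsIcc
    have hlamb : |lam s| ≤ 2 * b * T + sqD := by
      rw [hlameq s hs]
      have h1 := abs_real_inner_le_norm (X1 s) (Z s)
      rw [hX1n, one_mul] at h1
      have h2 : ‖X2 s‖ ^ 2 ≤ 2 * b * T := hAg s hsIcc
      have h3 : |(-‖X2 s‖ ^ 2 - ⟪X1 s, Z s⟫)| ≤ ‖X2 s‖ ^ 2 + |⟪X1 s, Z s⟫| := by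
        calc |(-‖X2 s‖ ^ 2 - ⟪X1 s, Z s⟫)| ≤ |(-‖X2 s‖ ^ 2)| + |⟪X1 s, Z s⟫| :=
              abs_sub _ _
          _ = ‖X2 s‖ ^ 2 + |⟪X1 s, Z s⟫| := by rw [abs_neg, abs_of_nonneg (sq_nonneg _)]
      linarith
    have hlamd' : |deriv lam s| ≤ 3 * sqD * ‖X2 s‖ + ‖dZ s‖ := by
      rw [hlamd s hs]
      have h1 := abs_real_inner_le_norm (X2 s) (Z s)
      have h2 := abs_real_inner_le_norm (X1 s) (dZ s)
      rw [hX1n, one_mul] at h2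
      have h3 : |(-3 * ⟪X2 s, Z s⟫ - ⟪X1 s, dZ s⟫)|
          ≤ 3 * |⟪X2 s, Z s⟫| + |⟪X1 s, dZ s⟫| := by
        calc |(-3 * ⟪X2 s, Z s⟫ - ⟪X1 s, dZ s⟫)|
            ≤ |(-3 * ⟪X2 s, Z s⟫)| + |⟪X1 s, dZ s⟫| := abs_sub _ _
          _ = 3 * |⟪X2 s, Z s⟫| + |⟪X1 s, dZ s⟫| := by
              rw [abs_mul]; norm_num
      have h4 : ‖X2 s‖ * ‖Z s‖ ≤ ‖X2 s‖ * sqD :=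
        mul_le_mul_of_nonneg_left hZn (norm_nonneg _)
      nlinarith [norm_nonneg (X2 s)]
    have hn2 : (0:ℝ) ≤ ‖X2 s‖ := norm_nonneg _
    rw [hX1n, mul_one] at htri
    nlinarith [mul_le_mul_of_nonneg_right hlamb hn2]
  -- extend pointwise bound to the closed interval
  have hptwIcc : ∀ s ∈ Icc (0:ℝ) 1,
      ‖X4 s‖ ≤ 2 * ‖dZ s‖ + (4 * sqD + 2 * b * T) * ‖X2 s‖ := by
    have hclosed : IsClosed {s : ℝ |
        ‖X4 s‖ ≤ 2 * ‖dZ s‖ + (4 * sqD + 2 * b * T) * ‖X2 s‖} :=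
      isClosed_le cont4.norm
        (((continuous_const.mul contdZ.norm)).add (continuous_const.mul cont2.norm))
    have hsub : Ioo (0:ℝ) 1 ⊆ {s : ℝ |
        ‖X4 s‖ ≤ 2 * ‖dZ s‖ + (4 * sqD + 2 * b * T) * ‖X2 s‖} := hptw
    have := closure_minimal hsub hclosed
    rw [closure_Ioo (by norm_num : (0:ℝ) ≠ 1)] at this
    exact this
  -- L² bound for X4
  have hKey : N ≤ 2 * sqD + (4 * sqD + 2 * b * T) * b := by
    set K : ℝ := 4 * sqD + 2 * b * T with hKdef
    have hK0 : 0 ≤ K := by positivity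
    have h1 : ∫ s in (0:ℝ)..1, ‖X4 s‖ ^ 2
        ≤ ∫ s in (0:ℝ)..1, (2 * ‖dZ s‖ + K * ‖X2 s‖) ^ 2 := by
      apply intervalIntegral.integral_mono_on (by norm_num)
        ((cont4.norm.pow 2).intervalIntegrable _ _)
        ((((continuous_const.mul contdZ.norm).add
          (continuous_const.mul cont2.norm)).pow 2).intervalIntegrable _ _)
      intro s hs
      have h := hptwIcc s hs
      have h0 : (0:ℝ) ≤ ‖X4 s‖ := norm_nonneg _
      show ‖X4 s‖ ^ 2 ≤ (2 * ‖dZ s‖ + K * ‖X2 s‖) ^ 2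
      nlinarith
    have h2 := L2_combo (fun s => ‖dZ s‖) (fun s => ‖X2 s‖) contdZ.norm cont2.norm
      2 K (by norm_num) hK0
    have h3 : N ≤ Real.sqrt (∫ s in (0:ℝ)..1, (2 * ‖dZ s‖ + K * ‖X2 s‖) ^ 2) := by
      rw [hNdef]; exact Real.sqrt_le_sqrt h1
    have h4 : Real.sqrt (∫ s in (0:ℝ)..1, ‖dZ s‖ ^ 2) = sqD := by rw [hsqDdef, hD]
    rw [h4, ← hbdef] at h2
    calc N ≤ _ := h3
      _ ≤ 2 * sqD + K * b := h2
      _ = 2 * sqD + K * b := rfl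
  -- Young's inequality step : 2 b^2 T ≤ N / 2 + 2 b^5
  have hYoung : 2 * b ^ 2 * T ≤ N / 2 + 2 * b ^ 5 := by
    rcases eq_or_lt_of_le hb0 with hb | hb
    · rw [← hb]
      have hT00 : T * 0 = 0 := mul_zero T
      nlinarith [hN0]
    · have key : 0 ≤ b * (N / 2 + 2 * b ^ 5 - 2 * b ^ 2 * T) := by
        nlinarith [sq_nonneg (T - 2 * b ^ 3), hIBP]
      have := div_nonneg key hb.le
      rw [mul_comm, mul_div_assoc, div_self (ne_of_gt hb), mul_one] at this
      linarith
  have hNfinal : N ≤ 4 * sqD + 8 * sqD * b + 4 * b ^ 5 := by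
    have : N ≤ 2 * sqD + 4 * sqD * b + 2 * b ^ 2 * T := by nlinarith [hKey]
    linarith [hYoung]
  -- express b in terms of E
  have hbE : b = Real.sqrt 2 * Real.sqrt E := by
    rw [hbdef, show (∫ s in (0:ℝ)..1, ‖X2 s‖ ^ 2) = 2 * E by linarith [hE],
      Real.sqrt_mul (by norm_num : (0:ℝ) ≤ 2)]
  have hsqrt2 : Real.sqrt 2 ≤ 1.5 := by
    nlinarith [Real.sq_sqrt (by norm_num : (0:ℝ) ≤ 2), Real.sqrt_nonneg 2]
  have hsqrt2' : 0 ≤ Real.sqrt 2 := Real.sqrt_nonneg 2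
  have hsqE : 0 ≤ Real.sqrt E := Real.sqrt_nonneg E
  have hE52 : Real.sqrt E ^ 5 = E ^ ((5:ℝ)/2) := by
    rw [Real.sqrt_eq_rpow, ← Real.rpow_natCast (E ^ (1/(2:ℝ))) 5, ← Real.rpow_mul hE0]
    norm_num
  have hE520 : 0 ≤ E ^ ((5:ℝ)/2) := Real.rpow_nonneg hE0 _
  have hb5 : b ^ 5 = 4 * Real.sqrt 2 * E ^ ((5:ℝ)/2) := by
    rw [hbE, mul_pow, hE52]
    have h2 : Real.sqrt 2 ^ 5 = 4 * Real.sqrt 2 := by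
      have h := Real.sq_sqrt (by norm_num : (0:ℝ) ≤ 2)
      calc Real.sqrt 2 ^ 5 = (Real.sqrt 2 ^ 2) ^ 2 * Real.sqrt 2 := by ring
        _ = 4 * Real.sqrt 2 := by rw [h]; norm_num
    rw [h2]
  -- conclusion
  have hgoal : N ≤ 30 * (sqD * (1 + Real.sqrt E) + E ^ ((5:ℝ)/2)) := by
    rw [hb5, hbE] at hNfinal
    nlinarith [mul_le_mul_of_nonneg_right hsqrt2 (mul_nonneg hsqD0 hsqE),
      mul_le_mul_of_nonneg_right hsqrt2 hE520, mul_nonneg hsqD0 hsqE, hE520, hsqD0, hsqE]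
  show Real.sqrt (∫ s in (0:ℝ)..1, ‖iteratedDeriv 4 X s‖ ^ 2) ≤ _
  rw [hit4, ← hNdef, ← hsqDdef]
  exact hgoal
end
end

section
/- Let X ∈ C⁴([0,1];ℝ³) be inextensible (|X'(s)| = 1 for all s) with X''(0) = X''(1) = 0 and X'''(0) = X'''(1) = 0, and let λ ∈ C¹([0,1];ℝ) with λ(0) = λ(1) = 0. Set W := X''' − λX'. Then ∫₀¹ |X''(s)|² ds ≤ (1/π⁴) ∫₀¹ |W'(s)|² ds. -/
open MeasureTheory Set
open scoped RealInnerProductSpace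

noncomputable section

open Real

set_option maxHeartbeats 1000000 in
lemma cot_poincare (f : ℝ → E3) (h : ℝ → ℝ)
    (hf : ContDiff ℝ 1 f) (hh : Continuous h)
    (hf0 : f 0 = 0) (hf1 : f 1 = 0)
    (key : ∀ s ∈ Ioo (0:ℝ) 1, ∀ c : ℝ,
      2 * c * ⟪f s, deriv f s⟫ - c ^ 2 * ‖f s‖ ^ 2 ≤ h s) :
    π ^ 2 * ∫ s in (0:ℝ)..1, ‖f s‖ ^ 2 ≤ ∫ s in (0:ℝ)..1, h s := by
  have hπ : 0 < π := Real.pi_pos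
  have hfd : Differentiable ℝ f := hf.differentiable one_ne_zero
  have hf' : Continuous (deriv f) := hf.continuous_deriv le_rfl
  obtain ⟨M0, hM0⟩ := (isCompact_Icc (a := (0:ℝ)) (b := 1)).exists_bound_of_continuousOn
    hf'.continuousOn
  set M : ℝ := max M0 0 with hMdef
  have hMnn : 0 ≤ M := le_max_right _ _
  have hM : ∀ x ∈ Icc (0:ℝ) 1, ‖deriv f x‖ ≤ M := fun x hx => (hM0 x hx).trans (le_max_left _ _)
  -- Lipschitz bounds from both endpoints
  have hLip0 : ∀ s ∈ Icc (0:ℝ) 1, ‖f s‖ ≤ M * s := by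
    intro s hs
    have := Convex.norm_image_sub_le_of_norm_deriv_le (f := f) (s := Icc (0:ℝ) 1)
      (fun x _ => hfd.differentiableAt) hM (convex_Icc 0 1) (left_mem_Icc.2 zero_le_one) hs
    simpa [hf0, abs_of_nonneg hs.1] using this
  have hLip1 : ∀ s ∈ Icc (0:ℝ) 1, ‖f s‖ ≤ M * (1 - s) := by
    intro s hs
    have := Convex.norm_image_sub_le_of_norm_deriv_le (f := f) (s := Icc (0:ℝ) 1)
      (fun x _ => hfd.differentiableAt) hM (convex_Icc 0 1) (right_mem_Icc.2 zero_le_one) hs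
    have h1 : |s - 1| = 1 - s := by rw [abs_of_nonpos (by linarith [hs.2])]; ring
    simpa [hf1, h1] using this
  have hsin : ∀ s ∈ Ioo (0:ℝ) 1, 0 < Real.sin (π * s) := by
    intro s hs
    exact Real.sin_pos_of_pos_of_lt_pi (by nlinarith [hs.1]) (by nlinarith [hs.2])
  -- key quantitative bound
  have B1 : ∀ s ∈ Ioo (0:ℝ) 1, π * ‖f s‖ ≤ (π * M / 2) * Real.sin (π * s) := by
    intro s hs
    rcases le_or_gt s (1/2) with hhalf | hhalf
    · have h2s : 2 * s ≤ Real.sin (π * s) := by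
        have := Real.mul_le_sin (x := π * s) (by nlinarith [hs.1]) (by nlinarith)
        calc 2 * s = 2 / π * (π * s) := by field_simp
        _ ≤ _ := this
      have hfs := hLip0 s (Ioo_subset_Icc_self hs)
      have hp1 := mul_le_mul_of_nonneg_left hfs hπ.le
      have hp2 := mul_le_mul_of_nonneg_left h2s (by positivity : (0:ℝ) ≤ π * M / 2)
      linarith
    · have h2s : 2 * (1 - s) ≤ Real.sin (π * s) := by
        have := Real.mul_le_sin (x := π * (1 - s)) (by nlinarith [hs.2]) (by nlinarith)
        have e : Real.sin (π * (1 - s)) = Real.sin (π * s) := by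
          rw [show π * (1 - s) = π - π * s by ring, Real.sin_pi_sub]
        calc 2 * (1 - s) = 2 / π * (π * (1 - s)) := by field_simp
        _ ≤ Real.sin (π * (1 - s)) := this
        _ = _ := e
      have hfs := hLip1 s (Ioo_subset_Icc_self hs)
      have hp1 := mul_le_mul_of_nonneg_left hfs hπ.le
      have hp2 := mul_le_mul_of_nonneg_left h2s (by positivity : (0:ℝ) ≤ π * M / 2)
      linarith
  -- abbreviations
  set φ : ℝ → ℝ := fun s => ‖f s‖ ^ 2 with hφdef
  set ψ : ℝ → ℝ := fun s => π * Real.cos (π * s) / Real.sin (π * s) with hψdef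
  set F : ℝ → ℝ := fun s => ψ s * φ s with hFdef
  set D : ℝ → ℝ := fun s =>
    (-(π ^ 2) / Real.sin (π * s) ^ 2) * φ s + ψ s * (2 * ⟪f s, deriv f s⟫) with hDdef
  set G : ℝ → ℝ := fun s => if s ∈ Ioo (0:ℝ) 1 then D s else h s - π ^ 2 * φ s with hGdef
  have hφcont : Continuous φ := (hf.continuous.norm).pow 2
  have hinncont : Continuous fun s => (⟪f s, deriv f s⟫ : ℝ) := hf.continuous.inner hf'
  have hφderiv : ∀ s, HasDerivAt φ (2 * ⟪f s, deriv f s⟫) s := by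
    intro s
    have h1 := HasDerivAt.inner ℝ ((hfd s).hasDerivAt) ((hfd s).hasDerivAt)
    simp only [real_inner_self_eq_norm_sq] at h1
    exact h1.congr_deriv (by rw [real_inner_comm (deriv f s) (f s)]; ring)
  have hψderiv : ∀ s ∈ Ioo (0:ℝ) 1,
      HasDerivAt ψ (-(π ^ 2) / Real.sin (π * s) ^ 2) s := by
    intro s hs
    have hlin : HasDerivAt (fun t : ℝ => π * t) π s := by
      simpa using (hasDerivAt_id s).const_mul π
    have hcos : HasDerivAt (fun t => Real.cos (π * t)) (-Real.sin (π * s) * π) s :=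
      (Real.hasDerivAt_cos (π * s)).comp s hlin
    have hsin' : HasDerivAt (fun t => Real.sin (π * t)) (Real.cos (π * s) * π) s :=
      (Real.hasDerivAt_sin (π * s)).comp s hlin
    have hnum : HasDerivAt (fun t => π * Real.cos (π * t)) (π * (-Real.sin (π * s) * π)) s :=
      hcos.const_mul π
    have hden := hsin'
    have hne : Real.sin (π * s) ≠ 0 := (hsin s hs).ne'
    have := hnum.div hden hne
    refine this.congr_deriv ?_
    have hsc := Real.sin_sq_add_cos_sq (π * s)
    field_simp
    linear_combination (-1) * hsc
  have hFderiv : ∀ s ∈ Ioo (0:ℝ) 1, HasDerivAt F (D s) s := by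
    intro s hs
    exact (hψderiv s hs).mul (hφderiv s)
  -- |ψ| * sin = π * |cos| ≤ π
  have hψsin : ∀ s ∈ Ioo (0:ℝ) 1, |ψ s| * Real.sin (π * s) ≤ π := by
    intro s hs
    have hne : Real.sin (π * s) ≠ 0 := (hsin s hs).ne'
    rw [hψdef]
    rw [abs_div, abs_of_pos (hsin s hs), div_mul_cancel₀ _ hne, abs_mul,
      abs_of_pos hπ]
    nlinarith [Real.abs_cos_le_one (π * s)]
  -- uniform bounds
  have hψf : ∀ s ∈ Ioo (0:ℝ) 1, |ψ s| * ‖f s‖ ≤ π * M / 2 := by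
    intro s hs
    have h1 := hψsin s hs
    have h2 := B1 s hs
    have h3 := hsin s hs
    have h4 : |ψ s| * ‖f s‖ * Real.sin (π * s) ≤ π * M / 2 * Real.sin (π * s) := by
      have := mul_le_mul_of_nonneg_right h1 (norm_nonneg (f s))
      nlinarith [abs_nonneg (ψ s), norm_nonneg (f s)]
    exact le_of_mul_le_mul_right (by linarith [h4]) h3
  have hπsinf : ∀ s ∈ Ioo (0:ℝ) 1, π / Real.sin (π * s) * ‖f s‖ ≤ π * M / 2 := by
    intro s hs
    have h3 := hsin s hs
    rw [div_mul_eq_mul_div, div_le_iff₀ h3]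
    exact B1 s hs
  -- bound on F
  have habs : ∀ t ∈ Icc (0:ℝ) 1, |F t| ≤ (π * M / 2) * ‖f t‖ := by
    intro t ht
    by_cases hio : t ∈ Ioo (0:ℝ) 1
    · have : |F t| = |ψ t| * φ t := by
        rw [hFdef, abs_mul, abs_of_nonneg (by positivity : (0:ℝ) ≤ φ t)]
      rw [this, hφdef]
      have := mul_le_mul_of_nonneg_right (hψf t hio) (norm_nonneg (f t))
      nlinarith [norm_nonneg (f t)]
    · have : t = 0 ∨ t = 1 := by
        rcases lt_or_eq_of_le ht.1 with h0 | h0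
        · rcases lt_or_eq_of_le ht.2 with h1 | h1
          · exact absurd ⟨h0, h1⟩ hio
          · right; exact h1
        · left; exact h0.symm
      rcases this with rfl | rfl
      · simp only [hFdef, hφdef, hf0]
        simp
      · simp only [hFdef, hφdef, hf1]
        simp
  have hFcont : ContinuousOn F (Icc 0 1) := by
    intro s hs
    by_cases hio : s ∈ Ioo (0:ℝ) 1
    · have hψc : ContinuousAt ψ s := by
        apply ContinuousAt.div
        · exact (continuous_const.mul (Real.continuous_cos.comp
            (continuous_const.mul continuous_id))).continuousAt
        · exact (Real.continuous_sin.comp (continuous_const.mul continuous_id)).continuousAt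
        · exact (hsin s hio).ne'
      exact (hψc.mul hφcont.continuousAt).continuousWithinAt
    · have hs01 : s = 0 ∨ s = 1 := by
        rcases lt_or_eq_of_le hs.1 with h0 | h0
        · rcases lt_or_eq_of_le hs.2 with h1 | h1
          · exact absurd ⟨h0, h1⟩ hio
          · right; exact h1
        · left; exact h0.symm
      have hFs : F s = 0 := by
        rcases hs01 with rfl | rfl
        · simp [hFdef, hφdef, hf0]
        · simp [hFdef, hφdef, hf1]
      have hfs0 : ‖f s‖ = 0 := by
        rcases hs01 with rfl | rfl
        · simp [hf0]
        · simp [hf1]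
      rw [ContinuousWithinAt, hFs]
      apply squeeze_zero_norm'
      · exact Filter.eventually_of_mem self_mem_nhdsWithin fun t ht => by
          simpa [Real.norm_eq_abs] using habs t ht
      · have : Filter.Tendsto (fun t => (π * M / 2) * ‖f t‖) (nhdsWithin s (Icc 0 1))
            (nhds ((π * M / 2) * ‖f s‖)) :=
          ((continuous_const.mul hf.continuous.norm).continuousAt).continuousWithinAt
        rw [hfs0, mul_zero] at this
        exact this
  -- bound on D
  have hDbound : ∀ s ∈ Ioo (0:ℝ) 1, |D s| ≤ (π * M / 2) ^ 2 + π * M ^ 2 := by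
    intro s hs
    have h3 := hsin s hs
    have hfb : ‖deriv f s‖ ≤ M := hM s (Ioo_subset_Icc_self hs)
    have e1 : |(-(π ^ 2) / Real.sin (π * s) ^ 2) * φ s|
        = (π / Real.sin (π * s) * ‖f s‖) ^ 2 := by
      rw [hφdef, abs_mul, abs_div, abs_neg, abs_of_nonneg (sq_nonneg π),
        abs_of_nonneg (sq_nonneg _), abs_of_nonneg (by positivity : (0:ℝ) ≤ ‖f s‖^2)]
      rw [mul_pow, div_pow]
    have b1 : |(-(π ^ 2) / Real.sin (π * s) ^ 2) * φ s| ≤ (π * M / 2) ^ 2 := by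
      rw [e1]
      exact pow_le_pow_left₀ (by positivity) (hπsinf s hs) 2
    have b2 : |ψ s * (2 * ⟪f s, deriv f s⟫)| ≤ π * M ^ 2 := by
      rw [abs_mul, abs_mul]
      have hi := abs_real_inner_le_norm (f s) (deriv f s)
      have h1 := hψf s hs
      have : |ψ s| * (|(2:ℝ)| * |⟪f s, deriv f s⟫|) ≤ |ψ s| * (2 * (‖f s‖ * M)) := by
        apply mul_le_mul_of_nonneg_left _ (abs_nonneg _)
        rw [abs_two]
        apply mul_le_mul_of_nonneg_left _ (by norm_num)
        exact hi.trans (mul_le_mul_of_nonneg_left hfb (norm_nonneg _))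
      refine this.trans ?_
      have h2 : |ψ s| * ‖f s‖ * (2 * M) ≤ (π * M / 2) * (2 * M) :=
        mul_le_mul_of_nonneg_right h1 (by positivity)
      nlinarith [abs_nonneg (ψ s), norm_nonneg (f s)]
    calc |D s| ≤ |(-(π ^ 2) / Real.sin (π * s) ^ 2) * φ s|
        + |ψ s * (2 * ⟪f s, deriv f s⟫)| := abs_add_le _ _
    _ ≤ (π * M / 2) ^ 2 + π * M ^ 2 := add_le_add b1 b2
  -- bound on h
  obtain ⟨Ch0, hCh0⟩ := (isCompact_Icc (a := (0:ℝ)) (b := 1)).exists_bound_of_continuousOn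
    hh.continuousOn
  set Ch : ℝ := max Ch0 0 with hChdef
  have hCh : ∀ x ∈ Icc (0:ℝ) 1, |h x| ≤ Ch := fun x hx => by
    calc |h x| = ‖h x‖ := (Real.norm_eq_abs _).symm
    _ ≤ Ch0 := hCh0 x hx
    _ ≤ Ch := le_max_left _ _
  -- integrability of G
  set C : ℝ := (π * M / 2) ^ 2 + π * M ^ 2 + Ch + π ^ 2 * M ^ 2 with hCdef
  have hGbound : ∀ t ∈ Icc (0:ℝ) 1, |G t| ≤ C := by
    intro t ht
    by_cases hio : t ∈ Ioo (0:ℝ) 1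
    · have hGt : G t = D t := by simp only [hGdef]; rw [if_pos hio]
      rw [hGt]
      have hd := hDbound t hio
      have hChnn : 0 ≤ Ch := le_max_right _ _
      have h4 : (0:ℝ) ≤ π ^ 2 * M ^ 2 := by positivity
      rw [hCdef]; linarith
    · have hGt : G t = h t - π ^ 2 * φ t := by simp only [hGdef]; rw [if_neg hio]
      rw [hGt]
      have h1 := hCh t ht
      have h2 : φ t ≤ M ^ 2 := by
        show ‖f t‖ ^ 2 ≤ M ^ 2
        have := hLip0 t ht
        have h3 : M * t ≤ M := by nlinarith [ht.2]
        nlinarith [norm_nonneg (f t)]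
      have h5 : |h t - π ^ 2 * φ t| ≤ |h t| + π ^ 2 * φ t := by
        refine (abs_sub _ _).trans ?_
        rw [abs_of_nonneg (by positivity : (0:ℝ) ≤ π ^ 2 * φ t)]
      have h6 : π ^ 2 * φ t ≤ π ^ 2 * M ^ 2 :=
        mul_le_mul_of_nonneg_left h2 (sq_nonneg π)
      have h7 : (0:ℝ) ≤ (π * M / 2) ^ 2 + π * M ^ 2 := by positivity
      rw [hCdef]; linarith
  have hGmeas : Measurable G := by
    have hDm : Measurable D := by
      apply Measurable.add
      · exact ((measurable_const.div ((Real.measurable_sin.comp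
          (measurable_const.mul measurable_id)).pow measurable_const)).mul
          hφcont.measurable)
      · exact ((measurable_const.mul (Real.measurable_cos.comp
          (measurable_const.mul measurable_id))).div
          (Real.measurable_sin.comp (measurable_const.mul measurable_id))).mul
          (measurable_const.mul hinncont.measurable)
    exact Measurable.ite measurableSet_Ioo hDm
      (hh.measurable.sub (measurable_const.mul hφcont.measurable))
  have hGint : IntervalIntegrable G volume 0 1 := by
    rw [intervalIntegrable_iff, uIoc_of_le zero_le_one]
    apply Measure.integrableOn_of_bounded (M := C)
      measure_Ioc_lt_top.ne
      hGmeas.aestronglyMeasurable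
    rw [ae_restrict_iff' measurableSet_Ioc]
    exact Filter.Eventually.of_forall fun t ht => by
      simpa [Real.norm_eq_abs] using hGbound t ⟨ht.1.le, ht.2⟩
  -- FTC
  have hFTC : ∫ s in (0:ℝ)..1, G s = F 1 - F 0 := by
    apply intervalIntegral.integral_eq_sub_of_hasDeriv_right_of_le zero_le_one hFcont
      (fun x hx => by
        have : G x = D x := by rw [hGdef]; simp only [if_pos hx]
        rw [this]
        exact (hFderiv x hx).hasDerivWithinAt)
      hGint
  have hF0 : F 0 = 0 := by simp [hFdef, hφdef, hf0]
  have hF1 : F 1 = 0 := by simp [hFdef, hφdef, hf1]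
  -- pointwise nonnegativity
  have hpt : ∀ u ∈ Icc (0:ℝ) 1, 0 ≤ h u - π ^ 2 * φ u - G u := by
    intro u hu
    by_cases hio : u ∈ Ioo (0:ℝ) 1
    · have hGu : G u = D u := by simp only [hGdef]; rw [if_pos hio]
      rw [hGu]
      have hk := key u hio (ψ u)
      have hne : Real.sin (π * u) ≠ 0 := (hsin u hio).ne'
      have hψu : ψ u = π * Real.cos (π * u) / Real.sin (π * u) := rfl
      have ecoef : -(π ^ 2) / Real.sin (π * u) ^ 2
          = -(ψ u ^ 2) - π ^ 2 := by
        rw [hψu]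
        have hsc := Real.sin_sq_add_cos_sq (π * u)
        field_simp
        linear_combination hsc
      have e : D u = 2 * ψ u * ⟪f u, deriv f u⟫ - ψ u ^ 2 * φ u - π ^ 2 * φ u := by
        have hDu : D u = -(π ^ 2) / Real.sin (π * u) ^ 2 * φ u
            + ψ u * (2 * ⟪f u, deriv f u⟫) := rfl
        rw [hDu, ecoef]; ring
      rw [e]
      have hφu : φ u = ‖f u‖ ^ 2 := rfl
      rw [hφu] at *
      linarith
    · have hGu : G u = h u - π ^ 2 * φ u := by simp only [hGdef]; rw [if_neg hio]
      rw [hGu]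
      linarith
  -- assemble
  have hφint : IntervalIntegrable φ volume 0 1 := hφcont.intervalIntegrable 0 1
  have hhint : IntervalIntegrable h volume 0 1 := hh.intervalIntegrable 0 1
  have hπφint : IntervalIntegrable (fun s => π ^ 2 * φ s) volume 0 1 :=
    (continuous_const.mul hφcont).intervalIntegrable 0 1
  have hnn : (0:ℝ) ≤ ∫ s in (0:ℝ)..1, (h s - π ^ 2 * φ s - G s) :=
    intervalIntegral.integral_nonneg zero_le_one hpt
  have hsplit : ∫ s in (0:ℝ)..1, (h s - π ^ 2 * φ s - G s)
      = (∫ s in (0:ℝ)..1, h s) - π ^ 2 * (∫ s in (0:ℝ)..1, φ s)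
        - ∫ s in (0:ℝ)..1, G s := by
    rw [intervalIntegral.integral_sub (hhint.sub hπφint) hGint,
      intervalIntegral.integral_sub hhint hπφint,
      intervalIntegral.integral_const_mul]
  rw [hsplit, hFTC, hF0, hF1] at hnn
  have : π ^ 2 * ∫ s in (0:ℝ)..1, φ s ≤ ∫ s in (0:ℝ)..1, h s := by linarith
  exact this

/-- Poincaré inequality `E ≤ D/(2π⁴)` for the free-end
inextensible elastic filament. -/
theorem poincare_free_end (X : ℝ → E3) (lam : ℝ → ℝ)
    (hX : ContDiff ℝ 4 X) (hlam : ContDiff ℝ 1 lam)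
    (hinext : ∀ s ∈ Icc (0:ℝ) 1, ‖deriv X s‖ = 1)
    (hX20 : iteratedDeriv 2 X 0 = 0) (hX21 : iteratedDeriv 2 X 1 = 0)
    (hX30 : iteratedDeriv 3 X 0 = 0) (hX31 : iteratedDeriv 3 X 1 = 0)
    (hl0 : lam 0 = 0) (hl1 : lam 1 = 0)
    (W : ℝ → E3)
    (hW : ∀ s, W s = iteratedDeriv 3 X s - lam s • deriv X s) :
    (∫ s in (0:ℝ)..1, ‖iteratedDeriv 2 X s‖ ^ 2) ≤
      (1 / Real.pi ^ 4) * ∫ s in (0:ℝ)..1, ‖deriv W s‖ ^ 2 := by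
  have hπ : 0 < π := Real.pi_pos
  -- smoothness bookkeeping
  have hX4 : ContDiff ℝ ((3:WithTop ℕ∞) + 1) X := by
    rw [show (3:WithTop ℕ∞) + 1 = 4 from by norm_num]; exact hX
  have hd1 : ContDiff ℝ 3 (deriv X) := (contDiff_succ_iff_deriv.mp hX4).2.2
  have hd1' : ContDiff ℝ ((2:WithTop ℕ∞) + 1) (deriv X) := by
    rw [show (2:WithTop ℕ∞) + 1 = 3 from by norm_num]; exact hd1
  have hd2 : ContDiff ℝ 2 (deriv (deriv X)) := (contDiff_succ_iff_deriv.mp hd1').2.2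
  have hd2' : ContDiff ℝ ((1:WithTop ℕ∞) + 1) (deriv (deriv X)) := by
    rw [show (1:WithTop ℕ∞) + 1 = 2 from by norm_num]; exact hd2
  have hd3 : ContDiff ℝ 1 (deriv (deriv (deriv X))) := (contDiff_succ_iff_deriv.mp hd2').2.2
  have hi2 : iteratedDeriv 2 X = deriv (deriv X) := by
    rw [show (2:ℕ) = 1 + 1 from rfl, iteratedDeriv_succ, iteratedDeriv_one]
  have hi3 : iteratedDeriv 3 X = deriv (deriv (deriv X)) := by
    have h := iteratedDeriv_succ (n := 2) (f := X)
    rw [hi2] at h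
    exact h
  have hu1 : ContDiff ℝ 1 (iteratedDeriv 2 X) := by
    rw [hi2]; exact hd2.of_le (by norm_num)
  have hW1 : ContDiff ℝ 1 W := by
    have hWe : W = fun s => iteratedDeriv 3 X s - lam s • deriv X s := funext hW
    rw [hWe, hi3]
    exact hd3.sub (hlam.smul (hd1.of_le (by norm_num)))
  -- Step A : π² ∫‖W‖² ≤ ∫‖W'‖²
  have hA := cot_poincare W (fun s => ‖deriv W s‖ ^ 2) hW1
    (((hW1.continuous_deriv le_rfl).norm).pow 2)
    (by rw [hW 0, hX30, hl0]; simp)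
    (by rw [hW 1, hX31, hl1]; simp)
    (fun s _ c => by
      show 2 * c * ⟪W s, deriv W s⟫ - c ^ 2 * ‖W s‖ ^ 2 ≤ ‖deriv W s‖ ^ 2
      have h0 : (0:ℝ) ≤ ‖deriv W s - c • W s‖ ^ 2 := sq_nonneg _
      rw [norm_sub_sq_real, real_inner_smul_right, norm_smul, mul_pow,
        Real.norm_eq_abs, sq_abs] at h0
      have h1 : ⟪W s, deriv W s⟫ = ⟪deriv W s, W s⟫ := real_inner_comm _ _
      rw [h1]; linarith)
  -- Step B : π² ∫‖X''‖² ≤ ∫‖W‖²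
  have hB := cot_poincare (iteratedDeriv 2 X) (fun s => ‖W s‖ ^ 2) hu1
    ((hW1.continuous.norm).pow 2) hX20 hX21
    (fun s hs c => by
      show 2 * c * ⟪iteratedDeriv 2 X s, deriv (iteratedDeriv 2 X) s⟫
        - c ^ 2 * ‖iteratedDeriv 2 X s‖ ^ 2 ≤ ‖W s‖ ^ 2
      have hdd : Differentiable ℝ (deriv X) := hd1.differentiable (by norm_num)
      have hD := HasDerivAt.inner ℝ ((hdd s).hasDerivAt) ((hdd s).hasDerivAt)
      have hev : (fun t => (⟪deriv X t, deriv X t⟫:ℝ)) =ᶠ[nhds s] fun _ => (1:ℝ) := by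
        filter_upwards [Ioo_mem_nhds hs.1 hs.2] with t ht
        rw [real_inner_self_eq_norm_sq, hinext t (Ioo_subset_Icc_self ht)]; norm_num
      have hd0 : deriv (fun t => (⟪deriv X t, deriv X t⟫:ℝ)) s = 0 := by
        rw [hev.deriv_eq]; simp
      have h2 := hD.deriv
      rw [hd0] at h2
      have h3 : (⟪deriv X s, deriv (deriv X) s⟫:ℝ)
          = ⟪deriv (deriv X) s, deriv X s⟫ := real_inner_comm _ _
      have horth : (⟪iteratedDeriv 2 X s, deriv X s⟫:ℝ) = 0 := by
        rw [hi2]; linarith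
      have hder : deriv (iteratedDeriv 2 X) s = iteratedDeriv 3 X s :=
        (congrFun (iteratedDeriv_succ (n := 2) (f := X)) s).symm
      have hWs : iteratedDeriv 3 X s = W s + lam s • deriv X s := by
        rw [hW s, sub_add_cancel]
      have hinner : (⟪iteratedDeriv 2 X s, deriv (iteratedDeriv 2 X) s⟫:ℝ)
          = ⟪iteratedDeriv 2 X s, W s⟫ := by
        rw [hder, hWs, inner_add_right, real_inner_smul_right, horth, mul_zero, add_zero]
      have h0 : (0:ℝ) ≤ ‖W s - c • iteratedDeriv 2 X s‖ ^ 2 := sq_nonneg _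
      rw [norm_sub_sq_real, real_inner_smul_right, norm_smul, mul_pow,
        Real.norm_eq_abs, sq_abs] at h0
      have h4 : (⟪W s, iteratedDeriv 2 X s⟫:ℝ)
          = ⟪iteratedDeriv 2 X s, W s⟫ := real_inner_comm _ _
      rw [hinner]
      rw [h4] at h0
      linarith)
  -- combine
  have h2 := mul_le_mul_of_nonneg_left hB (sq_nonneg π)
  have h3 : π ^ 4 * ∫ s in (0:ℝ)..1, ‖iteratedDeriv 2 X s‖ ^ 2
      ≤ ∫ s in (0:ℝ)..1, ‖deriv W s‖ ^ 2 := by nlinarith [hA, h2]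
  have hπ4 : (0:ℝ) < π ^ 4 := by positivity
  rw [one_div, inv_mul_eq_div, le_div_iff₀ hπ4]
  linarith
end
end

section
/- Let η > 0, α > 0. Let X ∈ C⁴([0,1];ℝ³) be inextensible (|X'(s)| = 1 for all s) with X''(0) = X''(1) = 0 and X'''(0) = X'''(1) = 0, let λ ∈ C¹([0,1];ℝ) with λ(0) = λ(1) = 0, and let κ₃ ∈ C¹([0,1];ℝ) with κ₃(0) = κ₃(1) = 0. Set W̃ := X''' − λX' − ηκ₃ (X' × X''), where × is the cross product in ℝ³. Then (1/2)∫₀¹(|X''(s)|² + η κ₃(s)²) ds ≤ (1/2)·max(1/π⁴, α/(ηπ²))·(∫₀¹|W̃'(s)|² ds + (η²/α)∫₀¹ κ₃'(s)² ds). -/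
open MeasureTheory Set
open scoped RealInnerProductSpace

noncomputable section

/-- Cross product on `ℝ³`. -/
def cross3 (a b : E3) : E3 :=
  (EuclideanSpace.equiv (Fin 3) ℝ).symm
    ![a 1 * b 2 - a 2 * b 1, a 2 * b 0 - a 0 * b 2, a 0 * b 1 - a 1 * b 0]

lemma cross3_apply (a b : E3) (i : Fin 3) :
    cross3 a b i = ![a 1 * b 2 - a 2 * b 1, a 2 * b 0 - a 0 * b 2,
      a 0 * b 1 - a 1 * b 0] i := rfl

lemma inner_cross3_right (v u w : E3) : ⟪v, cross3 u w⟫ =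
    v 0 * (u 1 * w 2 - u 2 * w 1) + v 1 * (u 2 * w 0 - u 0 * w 2)
      + v 2 * (u 0 * w 1 - u 1 * w 0) := by
  rw [PiLp.inner_apply, Fin.sum_univ_three]
  simp [cross3_apply, RCLike.inner_apply]; ring

lemma inner_cross3_self_right (v u : E3) : ⟪v, cross3 u v⟫ = 0 := by
  rw [inner_cross3_right]; ring

lemma contDiff_cross3 {n : WithTop ℕ∞} {u v : ℝ → E3}
    (hu : ContDiff ℝ n u) (hv : ContDiff ℝ n v) :
    ContDiff ℝ n (fun s => cross3 (u s) (v s)) := by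
  have hui : ∀ j : Fin 3, ContDiff ℝ n (fun s => u s j) := fun j => by
    have := ((EuclideanSpace.proj (𝕜 := ℝ) j).contDiff).comp hu
    simpa [Function.comp_def] using this
  have hvi : ∀ j : Fin 3, ContDiff ℝ n (fun s => v s j) := fun j => by
    have := ((EuclideanSpace.proj (𝕜 := ℝ) j).contDiff).comp hv
    simpa [Function.comp_def] using this
  apply ((EuclideanSpace.equiv (Fin 3) ℝ).symm.contDiff).comp
  apply contDiff_pi.mpr
  intro i
  fin_cases i <;> simp <;>
    exact ((hui _).mul (hvi _)).sub ((hui _).mul (hvi _))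

set_option maxHeartbeats 1000000 in
/-- Sharp Poincaré inequality on [0,1] for C¹ functions vanishing at both endpoints. -/
lemma poincare01 {F : Type*} [NormedAddCommGroup F] [InnerProductSpace ℝ F] [CompleteSpace F]
    (f : ℝ → F) (hf : ContDiff ℝ 1 f) (h0 : f 0 = 0) (h1 : f 1 = 0) :
    ∫ s in (0:ℝ)..1, ‖f s‖ ^ 2 ≤ (1 / Real.pi ^ 2) * ∫ s in (0:ℝ)..1, ‖deriv f s‖ ^ 2 := by
  have pi_pos := Real.pi_pos
  have hfd : Differentiable ℝ f := hf.differentiable one_ne_zero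
  have hfc : Continuous f := hfd.continuous
  have hdc : Continuous (deriv f) := hf.continuous_deriv le_rfl
  set π : ℝ := Real.pi with hπ
  set φ : ℝ → ℝ := fun s => ‖deriv f s‖ ^ 2 - π ^ 2 * ‖f s‖ ^ 2 with hφ
  have hφc : Continuous φ := by fun_prop
  -- reduce to 0 ≤ ∫ φ
  -- bounds on [0,1]
  obtain ⟨L0, hL0⟩ := (isCompact_Icc : IsCompact (Icc (0:ℝ) 1)).exists_bound_of_continuousOn
    hdc.continuousOn
  set L := max L0 0 with hLdef
  have hLnn : (0:ℝ) ≤ L := le_max_right _ _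
  have hLb : ∀ s ∈ Icc (0:ℝ) 1, ‖deriv f s‖ ≤ L := fun s hs => (hL0 s hs).trans (le_max_left _ _)
  obtain ⟨M0, hM0⟩ := (isCompact_Icc : IsCompact (Icc (0:ℝ) 1)).exists_bound_of_continuousOn
    hφc.continuousOn
  set M := max M0 0 with hMdef
  have hMnn : (0:ℝ) ≤ M := le_max_right _ _
  have hMb : ∀ s ∈ Icc (0:ℝ) 1, |φ s| ≤ M := fun s hs => by
    have := (hM0 s hs).trans (le_max_left M0 0); rwa [Real.norm_eq_abs] at this
  -- value bounds from the endpoints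
  have hfval0 : ∀ s ∈ Icc (0:ℝ) 1, ‖f s‖ ≤ L * s := by
    intro s hs
    have hFTC : ∫ t in (0:ℝ)..s, deriv f t = f s - f 0 :=
      intervalIntegral.integral_deriv_eq_sub (fun t _ => hfd t)
        (hdc.intervalIntegrable _ _)
    rw [h0, sub_zero] at hFTC
    rw [← hFTC]
    have hb : ∀ t ∈ Set.uIoc (0:ℝ) s, ‖deriv f t‖ ≤ L := by
      intro t ht
      rw [Set.uIoc_of_le hs.1] at ht
      exact hLb t ⟨le_of_lt ht.1, ht.2.trans hs.2⟩
    have := intervalIntegral.norm_integral_le_of_norm_le_const hb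
    rwa [sub_zero, abs_of_nonneg hs.1] at this
  have hfval1 : ∀ s ∈ Icc (0:ℝ) 1, ‖f s‖ ≤ L * (1 - s) := by
    intro s hs
    have hFTC : ∫ t in s..(1:ℝ), deriv f t = f 1 - f s :=
      intervalIntegral.integral_deriv_eq_sub (fun t _ => hfd t)
        (hdc.intervalIntegrable _ _)
    rw [h1, zero_sub] at hFTC
    have : ‖f s‖ = ‖∫ t in s..(1:ℝ), deriv f t‖ := by rw [hFTC, norm_neg]
    rw [this]
    have hb : ∀ t ∈ Set.uIoc s (1:ℝ), ‖deriv f t‖ ≤ L := by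
      intro t ht
      rw [Set.uIoc_of_le hs.2] at ht
      exact hLb t ⟨hs.1.trans (le_of_lt ht.1), ht.2⟩
    have := intervalIntegral.norm_integral_le_of_norm_le_const hb
    rwa [abs_of_nonneg (by linarith [hs.2] : (0:ℝ) ≤ 1 - s)] at this
  -- the cotangent test function
  set c : ℝ → ℝ := fun s => π * (Real.cos (π * s) / Real.sin (π * s)) with hcdef
  set Bf : ℝ → ℝ := fun s => c s * ⟪f s, f s⟫ with hBfdef
  set bd : ℝ → ℝ := fun s =>
      π * (-(1 / Real.sin (π * s) ^ 2) * π) * ⟪f s, f s⟫ +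
        c s * (⟪f s, deriv f s⟫ + ⟪deriv f s, f s⟫) with hbddef
  have hsinpos : ∀ s ∈ Ioo (0:ℝ) 1, 0 < Real.sin (π * s) := by
    intro s hs
    exact Real.sin_pos_of_pos_of_lt_pi (by nlinarith [hs.1, pi_pos])
      (by nlinarith [hs.2, pi_pos])
  have hBD : ∀ s ∈ Ioo (0:ℝ) 1, HasDerivAt Bf (bd s) s := by
    intro s hs
    have hsin := hsinpos s hs
    have hps : HasDerivAt (fun t : ℝ => π * t) π s := by
      simpa using (hasDerivAt_id s).const_mul π
    have hsin' : HasDerivAt (fun t => Real.sin (π * t)) (Real.cos (π * s) * π) s :=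
      (Real.hasDerivAt_sin (π * s)).comp s hps
    have hcos' : HasDerivAt (fun t => Real.cos (π * t)) (-Real.sin (π * s) * π) s :=
      (Real.hasDerivAt_cos (π * s)).comp s hps
    have hcot : HasDerivAt (fun t => Real.cos (π * t) / Real.sin (π * t))
        ((-Real.sin (π * s) * π * Real.sin (π * s) -
          Real.cos (π * s) * (Real.cos (π * s) * π)) / Real.sin (π * s) ^ 2) s :=
      hcos'.div hsin' (ne_of_gt hsin)
    have hcot2 : HasDerivAt (fun t => Real.cos (π * t) / Real.sin (π * t))
        (-(1 / Real.sin (π * s) ^ 2) * π) s := by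
      convert hcot using 1
      have h1 : Real.sin (π * s) ^ 2 + Real.cos (π * s) ^ 2 = 1 :=
        Real.sin_sq_add_cos_sq _
      field_simp
      linear_combination h1
    have hinner : HasDerivAt (fun t => ⟪f t, f t⟫)
        (⟪f s, deriv f s⟫ + ⟪deriv f s, f s⟫) s :=
      (hfd s).hasDerivAt.inner ℝ (hfd s).hasDerivAt
    exact ((hcot2.const_mul π).mul hinner)
  have hptwise : ∀ s ∈ Ioo (0:ℝ) 1, bd s ≤ φ s := by
    intro s hs
    have hsin := hsinpos s hs
    have h1 : Real.sin (π * s) ^ 2 + Real.cos (π * s) ^ 2 = 1 :=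
      Real.sin_sq_add_cos_sq _
    have hcomm : ⟪deriv f s, f s⟫ = ⟪f s, deriv f s⟫ := real_inner_comm _ _
    have hself : (⟪f s, f s⟫ : ℝ) = ‖f s‖ ^ 2 := real_inner_self_eq_norm_sq _
    have hns : ‖c s • f s‖ ^ 2 = (c s) ^ 2 * ‖f s‖ ^ 2 := by
      rw [norm_smul, Real.norm_eq_abs, mul_pow, sq_abs]
    have hsmul : ⟪deriv f s, c s • f s⟫ = c s * ⟪deriv f s, f s⟫ :=
      real_inner_smul_right _ _ _
    have hcsq : (c s) ^ 2 = π ^ 2 / Real.sin (π * s) ^ 2 - π ^ 2 := by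
      simp only [hcdef]
      field_simp
      linear_combination h1
    have hexp : φ s - bd s = ‖deriv f s - c s • f s‖ ^ 2 := by
      rw [norm_sub_sq_real, hns, hsmul]
      simp only [hφ, hbddef]
      rw [hself, hcomm]
      have hsne : Real.sin (π * s) ≠ 0 := ne_of_gt hsin
      have hss : Real.sin (π * s) ^ 2 * (Real.sin (π * s))⁻¹ ^ 2 = 1 := by
        field_simp
      field_simp
      ring_nf
      linear_combination (‖f s‖ ^ 2) * hcsq +
        (-(π ^ 2 * ‖f s‖ ^ 2) * (1 + (Real.sin (π * s))⁻¹ ^ 2)) * h1 +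
        (π ^ 2 * ‖f s‖ ^ 2 * (1 - Real.cos (π * s) ^ 2)) * hss
    linarith [sq_nonneg (‖deriv f s - c s • f s‖), hexp]
  -- integrability of φ on subintervals
  have hφint : ∀ u v : ℝ, IntervalIntegrable φ volume u v := fun u v =>
    hφc.intervalIntegrable u v
  -- the ε-estimate
  have main : ∀ ε : ℝ, 0 < ε → ε < 1/2 → -(2 * (M + L ^ 2)) * ε ≤ ∫ s in (0:ℝ)..1, φ s := by
    intro ε hε hε2
    have hab : ε ≤ 1 - ε := by linarith
    have hsub : Icc ε (1 - ε) ⊆ Ioo (0:ℝ) 1 := fun t ht =>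
      ⟨lt_of_lt_of_le hε ht.1, lt_of_le_of_lt ht.2 (by linarith)⟩
    have hne : ∀ t ∈ Icc ε (1 - ε), Real.sin (π * t) ≠ 0 := fun t ht =>
      ne_of_gt (hsinpos t (hsub ht))
    have c1 : Continuous fun t => (⟪f t, f t⟫ : ℝ) := hfc.inner hfc
    have c2 : Continuous fun t => (⟪f t, deriv f t⟫ : ℝ) := hfc.inner hdc
    have c3 : Continuous fun t => (⟪deriv f t, f t⟫ : ℝ) := hdc.inner hfc
    have hbdcont : ContinuousOn bd (Set.uIcc ε (1 - ε)) := by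
      rw [Set.uIcc_of_le hab]
      simp only [hbddef, hcdef]
      apply ContinuousOn.add
      · apply ContinuousOn.mul _ c1.continuousOn
        apply continuousOn_const.mul
        apply ContinuousOn.mul _ continuousOn_const
        apply ContinuousOn.neg
        apply ContinuousOn.div continuousOn_const (by fun_prop)
        intro t ht; exact pow_ne_zero _ (hne t ht)
      · apply ContinuousOn.mul _ (c2.continuousOn.add c3.continuousOn)
        apply continuousOn_const.mul
        exact ContinuousOn.div (by fun_prop) (by fun_prop) hne
    have hFTC2 : ∫ t in ε..(1 - ε), bd t = Bf (1 - ε) - Bf ε :=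
      intervalIntegral.integral_eq_sub_of_hasDerivAt
        (fun t ht => hBD t (hsub (by rwa [Set.uIcc_of_le hab] at ht)))
        (hbdcont.intervalIntegrable)
    have hmono : ∫ t in ε..(1 - ε), bd t ≤ ∫ t in ε..(1 - ε), φ t :=
      intervalIntegral.integral_mono_on hab (hbdcont.intervalIntegrable)
        (hφint ε (1 - ε)) (fun t ht => hptwise t (hsub ht))
    -- endpoint bounds for Bf
    have hπε1 : 0 < π * ε := by positivity
    have hπε2 : π * ε < π / 2 := by nlinarith [pi_pos]
    have hsinε : 0 < Real.sin (π * ε) := hsinpos ε ⟨hε, by linarith⟩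
    have hcosε : 0 < Real.cos (π * ε) :=
      Real.cos_pos_of_mem_Ioo ⟨by linarith [pi_pos], hπε2⟩
    have htan : π * ε < Real.tan (π * ε) := Real.lt_tan hπε1 hπε2
    rw [Real.tan_eq_sin_div_cos] at htan
    have htan2 : π * ε * Real.cos (π * ε) < Real.sin (π * ε) :=
      (lt_div_iff₀ hcosε).mp htan
    have hclt : π * (Real.cos (π * ε) / Real.sin (π * ε)) ≤ 1 / ε := by
      rw [mul_div_assoc', div_le_div_iff₀ hsinε hε]
      nlinarith
    have hcnn : 0 ≤ π * (Real.cos (π * ε) / Real.sin (π * ε)) := by positivity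
    have hqa : (⟪f ε, f ε⟫ : ℝ) ≤ L ^ 2 * ε ^ 2 := by
      rw [real_inner_self_eq_norm_sq]
      have := hfval0 ε ⟨le_of_lt hε, by linarith⟩
      nlinarith [norm_nonneg (f ε)]
    have hqb : (⟪f (1 - ε), f (1 - ε)⟫ : ℝ) ≤ L ^ 2 * ε ^ 2 := by
      rw [real_inner_self_eq_norm_sq]
      have := hfval1 (1 - ε) ⟨by linarith, by linarith⟩
      have h1b : 1 - (1 - ε) = ε := by ring
      rw [h1b] at this
      nlinarith [norm_nonneg (f (1 - ε))]
    have hqann : (0:ℝ) ≤ ⟪f ε, f ε⟫ := real_inner_self_nonneg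
    have hqbnn : (0:ℝ) ≤ ⟪f (1 - ε), f (1 - ε)⟫ := real_inner_self_nonneg
    have hval : (1 / ε) * (L ^ 2 * ε ^ 2) = L ^ 2 * ε := by field_simp
    have hBfa : Bf ε ≤ L ^ 2 * ε := by
      have hBfa_eq : Bf ε = π * (Real.cos (π * ε) / Real.sin (π * ε)) * ⟪f ε, f ε⟫ := by
        simp only [hBfdef, hcdef]
      rw [hBfa_eq, ← hval]
      exact mul_le_mul hclt hqa hqann (by positivity)
    have hBfb : -(L ^ 2 * ε) ≤ Bf (1 - ε) := by
      have hcosb : Real.cos (π * (1 - ε)) = -Real.cos (π * ε) := by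
        have h : π * (1 - ε) = π - π * ε := by ring
        rw [h, Real.cos_pi_sub]
      have hsinb : Real.sin (π * (1 - ε)) = Real.sin (π * ε) := by
        have h : π * (1 - ε) = π - π * ε := by ring
        rw [h, Real.sin_pi_sub]
      have hBfb_eq : Bf (1 - ε)
          = -(π * (Real.cos (π * ε) / Real.sin (π * ε))) * ⟪f (1 - ε), f (1 - ε)⟫ := by
        simp only [hBfdef, hcdef]
        rw [hcosb, hsinb]; ring
      rw [hBfb_eq]
      have h5 : π * (Real.cos (π * ε) / Real.sin (π * ε)) * ⟪f (1 - ε), f (1 - ε)⟫ ≤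
          (1 / ε) * (L ^ 2 * ε ^ 2) := mul_le_mul hclt hqb hqbnn (by positivity)
      rw [hval] at h5
      linarith
    -- splitting the integral
    have hs1 : (∫ s in (0:ℝ)..ε, φ s) + ∫ s in ε..(1 - ε), φ s = ∫ s in (0:ℝ)..(1 - ε), φ s :=
      intervalIntegral.integral_add_adjacent_intervals (hφint 0 ε) (hφint ε (1 - ε))
    have hs2 : (∫ s in (0:ℝ)..(1 - ε), φ s) + ∫ s in (1 - ε)..1, φ s = ∫ s in (0:ℝ)..1, φ s :=
      intervalIntegral.integral_add_adjacent_intervals (hφint 0 (1 - ε)) (hφint (1 - ε) 1)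
    have he1 : |∫ s in (0:ℝ)..ε, φ s| ≤ M * ε := by
      have hb : ∀ t ∈ Set.uIoc (0:ℝ) ε, ‖φ t‖ ≤ M := by
        intro t ht
        rw [Set.uIoc_of_le (le_of_lt hε)] at ht
        rw [Real.norm_eq_abs]
        exact hMb t ⟨le_of_lt ht.1, by linarith [ht.2]⟩
      have := intervalIntegral.norm_integral_le_of_norm_le_const hb
      rwa [sub_zero, abs_of_nonneg (le_of_lt hε), Real.norm_eq_abs] at this
    have he2 : |∫ s in (1 - ε)..(1:ℝ), φ s| ≤ M * ε := by
      have hb : ∀ t ∈ Set.uIoc (1 - ε) (1:ℝ), ‖φ t‖ ≤ M := by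
        intro t ht
        rw [Set.uIoc_of_le (by linarith : (1:ℝ) - ε ≤ 1)] at ht
        rw [Real.norm_eq_abs]
        exact hMb t ⟨by linarith [ht.1], ht.2⟩
      have := intervalIntegral.norm_integral_le_of_norm_le_const hb
      have habs : |1 - (1 - ε)| = ε := by rw [abs_of_nonneg (by linarith)]; ring
      rwa [habs, Real.norm_eq_abs] at this
    have hmid : -(2 * L ^ 2 * ε) ≤ ∫ t in ε..(1 - ε), φ t := by
      calc -(2 * L ^ 2 * ε) ≤ Bf (1 - ε) - Bf ε := by linarith
        _ = ∫ t in ε..(1 - ε), bd t := hFTC2.symm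
        _ ≤ ∫ t in ε..(1 - ε), φ t := hmono
    have habs1 := abs_le.mp he1
    have habs2 := abs_le.mp he2
    linarith [hs1, hs2, hmid, habs1.1, habs2.1]
  -- conclude 0 ≤ ∫ φ
  have key : 0 ≤ ∫ s in (0:ℝ)..1, φ s := by
    by_contra hneg
    push_neg at hneg
    set I := ∫ s in (0:ℝ)..1, φ s with hI
    set ε : ℝ := min (1/4) (-I / (2 * (M + L ^ 2) + 1)) with hεdef
    have hC : (0:ℝ) < 2 * (M + L ^ 2) + 1 := by nlinarith
    have hε : 0 < ε := lt_min (by norm_num) (div_pos (by linarith) hC)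
    have hε2 : ε < 1/2 := lt_of_le_of_lt (min_le_left _ _) (by norm_num)
    have := main ε hε hε2
    have hεle : ε ≤ -I / (2 * (M + L ^ 2) + 1) := min_le_right _ _
    have : -(2 * (M + L ^ 2)) * ε ≤ I := this
    have h3 : 2 * (M + L ^ 2) * ε ≤ 2 * (M + L ^ 2) * (-I / (2 * (M + L ^ 2) + 1)) := by
      apply mul_le_mul_of_nonneg_left hεle (by nlinarith)
    have h4 : 2 * (M + L ^ 2) * (-I / (2 * (M + L ^ 2) + 1)) < -I := by
      rw [mul_div_assoc']
      rw [div_lt_iff₀ hC]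
      nlinarith
    linarith
  have hint1 : IntervalIntegrable (fun s => ‖deriv f s‖ ^ 2) volume 0 1 := by
    apply Continuous.intervalIntegrable; fun_prop
  have hint2 : IntervalIntegrable (fun s => ‖f s‖ ^ 2) volume 0 1 := by
    apply Continuous.intervalIntegrable; fun_prop
  have hsplit : (∫ s in (0:ℝ)..1, φ s)
      = (∫ s in (0:ℝ)..1, ‖deriv f s‖ ^ 2) - π ^ 2 * ∫ s in (0:ℝ)..1, ‖f s‖ ^ 2 := by
    rw [hφ]
    rw [intervalIntegral.integral_sub hint1 (hint2.const_mul _)]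
    rw [intervalIntegral.integral_const_mul]
  rw [hsplit] at key
  have hπ2 : (0:ℝ) < π ^ 2 := by positivity
  rw [div_mul_eq_mul_div, one_mul, le_div_iff₀ hπ2, mul_comm]
  linarith [key]


set_option maxHeartbeats 1000000 in
/-- Poincaré-type estimate for the norm of a vector field whose radial derivative
is controlled by a test field. -/
lemma reg_norm_poincare (Y Wf : ℝ → E3) (hX2 : ContDiff ℝ 2 Y) (hWcc : Continuous Wf)
    (hX20 : Y 0 = 0) (hX21 : Y 1 = 0)
    (hkey : ∀ s ∈ Icc (0:ℝ) 1, (⟪Y s, deriv Y s⟫ : ℝ) = ⟪Y s, Wf s⟫) :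
    (∫ s in (0:ℝ)..1, ‖Y s‖ ^ 2) ≤ (1 / Real.pi ^ 2) * ∫ s in (0:ℝ)..1, ‖Wf s‖ ^ 2 := by
  have hYc : Continuous Y := hX2.continuous
  have hYder : ∀ s, HasDerivAt Y (deriv Y s) s := fun s =>
    ((hX2.differentiable (by norm_num)) s).hasDerivAt
  set IA := ∫ s in (0:ℝ)..1, ‖Y s‖ ^ 2 with hIA
  set IW := ∫ s in (0:ℝ)..1, ‖Wf s‖ ^ 2 with hIW
  show IA ≤ (1 / Real.pi ^ 2) * IW
  have hkey' : ∀ s ∈ Icc (0:ℝ) 1, (⟪Y s, deriv Y s⟫ : ℝ) = ⟪Y s, Wf s⟫ := hkey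
  obtain ⟨M0, hM0⟩ := (isCompact_Icc : IsCompact (Icc (0:ℝ) 1)).exists_bound_of_continuousOn
    hYc.continuousOn
  set M := max M0 0 with hM
  have hMnn : (0:ℝ) ≤ M := le_max_right _ _
  have hMb : ∀ s ∈ Icc (0:ℝ) 1, ‖Y s‖ ≤ M := fun s hs =>
    (hM0 s hs).trans (le_max_left _ _)
  apply le_of_forall_pos_le_add
  intro δ hδ
  set ε := min 1 (δ / (2 * M + 1)) with hεdef
  have hεpos : 0 < ε := lt_min one_pos (by positivity)
  have hε1 : ε ≤ 1 := min_le_left _ _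
  set q : ℝ → ℝ := fun s => (⟪Y s, Y s⟫ : ℝ) + ε ^ 2 with hqdef
  have hqpos : ∀ s, 0 < q s := fun s => by
    have h1 : (0:ℝ) ≤ ⟪Y s, Y s⟫ := real_inner_self_nonneg
    have h2 : (0:ℝ) < ε ^ 2 := by positivity
    simp only [hqdef]; linarith
  have hqc : ContDiff ℝ 1 q :=
    ((ContDiff.inner ℝ hX2 hX2).add contDiff_const).of_le (by norm_num)
  set h : ℝ → ℝ := fun s => Real.sqrt (q s) - ε with hhdef
  have hhc : ContDiff ℝ 1 h :=
    (hqc.sqrt fun s => ne_of_gt (hqpos s)).sub contDiff_const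
  have hh0 : h 0 = 0 := by
    simp only [hhdef, hqdef]
    rw [hX20]
    simp [Real.sqrt_sq hεpos.le]
  have hh1 : h 1 = 0 := by
    simp only [hhdef, hqdef]
    rw [hX21]
    simp [Real.sqrt_sq hεpos.le]
  have hhd : ∀ s, HasDerivAt h ((⟪Y s, deriv Y s⟫ : ℝ) / Real.sqrt (q s)) s := by
    intro s
    have hqd : HasDerivAt q ((⟪Y s, deriv Y s⟫ : ℝ) + ⟪deriv Y s, Y s⟫) s :=
      (HasDerivAt.inner ℝ (hYder s) (hYder s)).add_const (ε ^ 2)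
    have hs2 := (hqd.sqrt (ne_of_gt (hqpos s))).sub_const ε
    refine hs2.congr_deriv ?_
    rw [real_inner_comm (deriv Y s) (Y s)]
    have hsne : Real.sqrt (q s) ≠ 0 := ne_of_gt (Real.sqrt_pos.mpr (hqpos s))
    field_simp
    ring
  have hbound : ∀ s ∈ Icc (0:ℝ) 1, (deriv h s) ^ 2 ≤ ‖Wf s‖ ^ 2 := by
    intro s hs
    rw [(hhd s).deriv, hkey' s hs]
    have hsq : Real.sqrt (q s) ^ 2 = q s := Real.sq_sqrt (hqpos s).le
    rw [div_pow, hsq, div_le_iff₀ (hqpos s)]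
    have hC := abs_real_inner_le_norm (Y s) (Wf s)
    have hY2 : (⟪Y s, Y s⟫ : ℝ) = ‖Y s‖ ^ 2 := real_inner_self_eq_norm_sq _
    have hiws : (⟪Y s, Wf s⟫ : ℝ) ^ 2 ≤ ‖Y s‖ ^ 2 * ‖Wf s‖ ^ 2 := by
      nlinarith [abs_nonneg (⟪Y s, Wf s⟫ : ℝ), sq_abs (⟪Y s, Wf s⟫ : ℝ),
        norm_nonneg (Y s), norm_nonneg (Wf s)]
    simp only [hqdef]
    rw [hY2]
    nlinarith [sq_nonneg (‖Wf s‖ * ε), sq_nonneg (‖Wf s‖)]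
  have hhcont : Continuous h := hhc.continuous
  have hdh : Continuous (deriv h) := hhc.continuous_deriv le_rfl
  have hPh := poincare01 h hhc hh0 hh1
  simp only [Real.norm_eq_abs, sq_abs] at hPh
  have hIh : (∫ s in (0:ℝ)..1, (deriv h s) ^ 2) ≤ IW :=
    intervalIntegral.integral_mono_on (by norm_num)
      (by apply Continuous.intervalIntegrable; fun_prop)
      (by apply Continuous.intervalIntegrable; fun_prop) hbound
  have hpt : ∀ s ∈ Icc (0:ℝ) 1, ‖Y s‖ ^ 2 ≤ (h s) ^ 2 + ε * (2 * M + ε) := by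
    intro s hs
    have hY2 : (⟪Y s, Y s⟫ : ℝ) = ‖Y s‖ ^ 2 := real_inner_self_eq_norm_sq _
    have hup : Real.sqrt (q s) ≤ ‖Y s‖ + ε := by
      rw [show ‖Y s‖ + ε = Real.sqrt ((‖Y s‖ + ε) ^ 2) from
        (Real.sqrt_sq (by positivity)).symm]
      apply Real.sqrt_le_sqrt
      simp only [hqdef]
      rw [hY2]
      nlinarith [norm_nonneg (Y s), hεpos.le]
    have hlo : ‖Y s‖ ≤ Real.sqrt (q s) := by
      rw [show ‖Y s‖ = Real.sqrt (‖Y s‖ ^ 2) from (Real.sqrt_sq (norm_nonneg _)).symm]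
      apply Real.sqrt_le_sqrt
      simp only [hqdef]
      rw [hY2]
      nlinarith [sq_nonneg ε]
    have hhs : h s = Real.sqrt (q s) - ε := rfl
    have hMs := hMb s hs
    nlinarith [hup, hlo, hMs, hεpos.le]
  have hIA2 : IA ≤ (∫ s in (0:ℝ)..1, (h s) ^ 2) + ε * (2 * M + ε) := by
    have step : IA ≤ ∫ s in (0:ℝ)..1, ((h s) ^ 2 + ε * (2 * M + ε)) :=
      intervalIntegral.integral_mono_on (by norm_num)
        (by apply Continuous.intervalIntegrable; fun_prop)
        (by apply Continuous.intervalIntegrable; fun_prop) hpt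
    rwa [intervalIntegral.integral_add
        (by apply Continuous.intervalIntegrable; fun_prop)
        (intervalIntegrable_const), intervalIntegral.integral_const,
        sub_zero, one_smul] at step
  have hfinal : IA ≤ (1 / Real.pi ^ 2) * IW + ε * (2 * M + ε) := by
    have h2 : (∫ s in (0:ℝ)..1, (h s) ^ 2) ≤ (1 / Real.pi ^ 2) * IW := by
      calc (∫ s in (0:ℝ)..1, (h s) ^ 2)
          ≤ (1 / Real.pi ^ 2) * ∫ s in (0:ℝ)..1, (deriv h s) ^ 2 := hPh
        _ ≤ (1 / Real.pi ^ 2) * IW := by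
            apply mul_le_mul_of_nonneg_left hIh (by positivity)
    linarith [hIA2]
  have hεδ : ε * (2 * M + ε) ≤ δ := by
    have h1 : ε * (2 * M + ε) ≤ ε * (2 * M + 1) := by nlinarith
    have h2 : ε ≤ δ / (2 * M + 1) := min_le_right _ _
    have h3 : (0:ℝ) < 2 * M + 1 := by linarith
    have h4 : ε * (2 * M + 1) ≤ (δ / (2 * M + 1)) * (2 * M + 1) := by
      apply mul_le_mul_of_nonneg_right h2 (by linarith)
    rw [div_mul_cancel₀ _ (ne_of_gt h3)] at h4
    linarith
  linarith


set_option maxHeartbeats 1000000 in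
/-- Poincaré inequality for the free-end Kirchhoff rod:
the rod energy is controlled by the rod energy dissipation. -/
theorem rod_poincare_free_end (η α : ℝ) (hη : 0 < η) (hα : 0 < α)
    (X : ℝ → E3) (lam κ₃ : ℝ → ℝ)
    (hX : ContDiff ℝ 4 X) (hlam : ContDiff ℝ 1 lam) (hκ : ContDiff ℝ 1 κ₃)
    (hinext : ∀ s ∈ Icc (0:ℝ) 1, ‖deriv X s‖ = 1)
    (hX20 : iteratedDeriv 2 X 0 = 0) (hX21 : iteratedDeriv 2 X 1 = 0)
    (hX30 : iteratedDeriv 3 X 0 = 0) (hX31 : iteratedDeriv 3 X 1 = 0)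
    (hl0 : lam 0 = 0) (hl1 : lam 1 = 0)
    (hκ0 : κ₃ 0 = 0) (hκ1 : κ₃ 1 = 0)
    (W : ℝ → E3)
    (hW : ∀ s, W s = iteratedDeriv 3 X s - lam s • deriv X s
        - (η * κ₃ s) • cross3 (deriv X s) (iteratedDeriv 2 X s)) :
    (1/2) * (∫ s in (0:ℝ)..1, (‖iteratedDeriv 2 X s‖ ^ 2 + η * (κ₃ s) ^ 2)) ≤
      (1/2) * max (1 / Real.pi ^ 4) (α / (η * Real.pi ^ 2)) *
        ((∫ s in (0:ℝ)..1, ‖deriv W s‖ ^ 2)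
          + (η ^ 2 / α) * ∫ s in (0:ℝ)..1, (deriv κ₃ s) ^ 2) := by
  have pi_pos := Real.pi_pos
  set Y : ℝ → E3 := iteratedDeriv 2 X with hYdef
  set Z : ℝ → E3 := iteratedDeriv 3 X with hZdef
  -- smoothness facts
  have hX1 : ContDiff ℝ 3 (deriv X) := by
    have h := ContDiff.iterate_deriv' 3 1 (f := X) (by exact_mod_cast hX)
    simpa using h
  have hX2 : ContDiff ℝ 2 Y := by
    have h := ContDiff.iterate_deriv' 2 2 (f := X) (by exact_mod_cast hX)
    rw [hYdef, iteratedDeriv_eq_iterate]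
    exact h
  have hX3 : ContDiff ℝ 1 Z := by
    have h := ContDiff.iterate_deriv' 1 3 (f := X) (by exact_mod_cast hX)
    rw [hZdef, iteratedDeriv_eq_iterate]
    exact h
  have hY1 : Y = deriv (deriv X) := by
    rw [hYdef]
    have e1 : iteratedDeriv 2 X = deriv (iteratedDeriv 1 X) := iteratedDeriv_succ (n := 1)
    rw [e1, iteratedDeriv_one]
  have hYd : deriv Y = Z := by
    rw [hYdef, hZdef]
    exact (iteratedDeriv_succ (n := 2)).symm
  have hYdd : ∀ s, HasDerivAt (deriv X) (Y s) s := fun s => by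
    have h := ((hX1.differentiable (by norm_num)) s).hasDerivAt
    rwa [← hY1] at h
  have hYder : ∀ s, HasDerivAt Y (Z s) s := fun s => by
    have h := ((hX2.differentiable (by norm_num)) s).hasDerivAt
    rwa [hYd] at h
  have hYc : Continuous Y := hX2.continuous
  have hκc : Continuous κ₃ := hκ.continuous
  have hκ'c : Continuous (deriv κ₃) := hκ.continuous_deriv le_rfl
  have hZc : Continuous Z := hX3.continuous
  have hX'c : Continuous (deriv X) := hX1.continuous
  -- properties of W
  have hWfun : W = fun s => Z s - lam s • deriv X s -
      (η * κ₃ s) • cross3 (deriv X s) (Y s) := funext fun s => hW s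
  have hWc : ContDiff ℝ 1 W := by
    rw [hWfun]
    exact (hX3.sub (hlam.smul (hX1.of_le (by norm_num)))).sub
      ((contDiff_const.mul hκ).smul
        (contDiff_cross3 (hX1.of_le (by norm_num)) (hX2.of_le (by norm_num))))
  have hWcc : Continuous W := hWc.continuous
  have hWdc : Continuous (deriv W) := hWc.continuous_deriv le_rfl
  have hW0 : W 0 = 0 := by
    rw [hW 0]; rw [hX30, hl0, hκ0]; simp
  have hW1 : W 1 = 0 := by
    rw [hW 1]; rw [hX31, hl1, hκ1]; simp
  -- orthogonality
  have horth : ∀ s ∈ Icc (0:ℝ) 1, ⟪Y s, deriv X s⟫ = 0 := by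
    intro s hs
    rcases eq_or_lt_of_le hs.1 with h0 | hlt0
    · rw [← h0, hX20]; simp
    rcases eq_or_lt_of_le hs.2 with h1 | hlt1
    · rw [h1, hX21]; simp
    · have hconst : (fun t => (⟪deriv X t, deriv X t⟫ : ℝ)) =ᶠ[nhds s]
          (fun _ => (1:ℝ)) := by
        filter_upwards [Ioo_mem_nhds hlt0 hlt1] with t ht
        rw [real_inner_self_eq_norm_sq, hinext t (Ioo_subset_Icc_self ht)]
        norm_num
      have hd : HasDerivAt (fun t => (⟪deriv X t, deriv X t⟫ : ℝ))
          (⟪deriv X s, Y s⟫ + ⟪Y s, deriv X s⟫) s :=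
        HasDerivAt.inner ℝ (hYdd s) (hYdd s)
      have h0' : deriv (fun t => (⟪deriv X t, deriv X t⟫ : ℝ)) s = 0 := by
        rw [Filter.EventuallyEq.deriv_eq hconst]
        simp
      rw [hd.deriv, real_inner_comm (deriv X s) (Y s)] at h0'
      rw [real_inner_comm (deriv X s) (Y s)]
      linarith [h0']
  have hkey : ∀ s ∈ Icc (0:ℝ) 1, ⟪Y s, W s⟫ = ⟪Y s, Z s⟫ := by
    intro s hs
    rw [hW s, inner_sub_right, inner_sub_right, real_inner_smul_right,
      real_inner_smul_right, horth s hs, inner_cross3_self_right]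
    ring
  -- abbreviations for the integrals
  set IA := ∫ s in (0:ℝ)..1, ‖Y s‖ ^ 2 with hIA
  set IK := ∫ s in (0:ℝ)..1, (κ₃ s) ^ 2 with hIK
  set IW := ∫ s in (0:ℝ)..1, ‖W s‖ ^ 2 with hIW
  set DW := ∫ s in (0:ℝ)..1, ‖deriv W s‖ ^ 2 with hDW
  set DK := ∫ s in (0:ℝ)..1, (deriv κ₃ s) ^ 2 with hDK
  have PW : IW ≤ (1 / Real.pi ^ 2) * DW := poincare01 W hWc hW0 hW1
  have PK : IK ≤ (1 / Real.pi ^ 2) * DK := by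
    have h := poincare01 κ₃ hκ hκ0 hκ1
    simpa [Real.norm_eq_abs, sq_abs] using h
  have PA : IA ≤ (1 / Real.pi ^ 2) * IW := by
    apply reg_norm_poincare Y W hX2 hWcc hX20 hX21
    intro s hs
    rw [hYd, hkey s hs]
  -- nonnegativity of the dissipation integrals
  have hDWnn : 0 ≤ DW := intervalIntegral.integral_nonneg (by norm_num)
    (fun u _ => by positivity)
  have hDKnn : 0 ≤ DK := intervalIntegral.integral_nonneg (by norm_num)
    (fun u _ => by positivity)
  -- assembling
  have hsplit : (∫ s in (0:ℝ)..1, (‖Y s‖ ^ 2 + η * (κ₃ s) ^ 2)) = IA + η * IK := by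
    rw [intervalIntegral.integral_add
      (by apply Continuous.intervalIntegrable; fun_prop)
      (by apply Continuous.intervalIntegrable; fun_prop),
      intervalIntegral.integral_const_mul]
  set m := max (1 / Real.pi ^ 4) (α / (η * Real.pi ^ 2)) with hm
  have hm1 : 1 / Real.pi ^ 4 ≤ m := le_max_left _ _
  have hm2 : α / (η * Real.pi ^ 2) ≤ m := le_max_right _ _
  have hIWnn : 0 ≤ IW := intervalIntegral.integral_nonneg (by norm_num)
    (fun u _ => by positivity)
  have hA4 : IA ≤ (1 / Real.pi ^ 4) * DW := by
    calc IA ≤ (1 / Real.pi ^ 2) * IW := PA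
      _ ≤ (1 / Real.pi ^ 2) * ((1 / Real.pi ^ 2) * DW) := by
          apply mul_le_mul_of_nonneg_left PW (by positivity)
      _ = (1 / Real.pi ^ 4) * DW := by ring
  have h1 : IA ≤ m * DW := hA4.trans (mul_le_mul_of_nonneg_right hm1 hDWnn)
  have h2 : η * IK ≤ m * ((η ^ 2 / α) * DK) := by
    have ha : η * IK ≤ η * ((1 / Real.pi ^ 2) * DK) :=
      mul_le_mul_of_nonneg_left PK hη.le
    have hb : η * ((1 / Real.pi ^ 2) * DK) = (α / (η * Real.pi ^ 2)) * ((η ^ 2 / α) * DK) := by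
      field_simp
    have hc : (α / (η * Real.pi ^ 2)) * ((η ^ 2 / α) * DK) ≤ m * ((η ^ 2 / α) * DK) := by
      apply mul_le_mul_of_nonneg_right hm2 (by positivity)
    linarith
  rw [hsplit]
  nlinarith [h1, h2]
end
end

section
/- Let γ ≥ 0 and T > 0. Let X : ℝ × [0,T] → ℝ³ and λ : ℝ × [0,T] → ℝ be smooth and 1-periodic in the first variable s, with |∂_sX(s,t)| = 1 for all (s,t). Set Z := ∂_s³X − λ∂_sX and suppose ∂_tX = −(∂_sZ + γ(∂_sX · ∂_sZ)∂_sX) on ℝ × [0,T]. Then for every t ∈ [0,T]: d/dt [(1/2)∫₀¹ |∂_s²X(s,t)|² ds] = −∫₀¹ |∂_sZ(s,t)|² ds − γ∫₀¹ (∂_sX(s,t)·∂_sZ(s,t))² ds. -/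
open MeasureTheory Set
open scoped RealInnerProductSpace

noncomputable section

namespace ElastoAux

variable {E : Type*} [NormedAddCommGroup E] [NormedSpace ℝ E]

/-- partial derivative in the first variable -/
def D1 (G : ℝ × ℝ → E) : ℝ × ℝ → E := fun p => fderiv ℝ G p (1, 0)

/-- partial derivative in the second variable -/
def D2 (G : ℝ × ℝ → E) : ℝ × ℝ → E := fun p => fderiv ℝ G p (0, 1)

theorem hasDerivAt_fst {G : ℝ × ℝ → E} (hG : ContDiff ℝ (⊤ : ℕ∞) G) (s t : ℝ) :
    HasDerivAt (fun u => G (u, t)) (D1 G (s, t)) s := by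
  have h := (hG.differentiable (by simp) (s, t)).hasFDerivAt
  have h2 : HasDerivAt (fun u : ℝ => (u, t)) ((1 : ℝ), (0 : ℝ)) s := by
    simpa using (hasDerivAt_id s).prodMk (hasDerivAt_const s t)
  exact h.comp_hasDerivAt s h2

theorem hasDerivAt_snd {G : ℝ × ℝ → E} (hG : ContDiff ℝ (⊤ : ℕ∞) G) (s t : ℝ) :
    HasDerivAt (fun τ => G (s, τ)) (D2 G (s, t)) t := by
  have h := (hG.differentiable (by simp) (s, t)).hasFDerivAt
  have h2 : HasDerivAt (fun τ : ℝ => (s, τ)) ((0 : ℝ), (1 : ℝ)) t := by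
    simpa using (hasDerivAt_const t s).prodMk (hasDerivAt_id t)
  exact h.comp_hasDerivAt t h2

theorem contDiff_D1 {G : ℝ × ℝ → E} (hG : ContDiff ℝ (⊤ : ℕ∞) G) :
    ContDiff ℝ (⊤ : ℕ∞) (D1 G) :=
  (hG.fderiv_right (by exact_mod_cast le_top)).clm_apply contDiff_const

theorem contDiff_D2 {G : ℝ × ℝ → E} (hG : ContDiff ℝ (⊤ : ℕ∞) G) :
    ContDiff ℝ (⊤ : ℕ∞) (D2 G) :=
  (hG.fderiv_right (by exact_mod_cast le_top)).clm_apply contDiff_const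

theorem D2_D1_comm {G : ℝ × ℝ → E} (hG : ContDiff ℝ (⊤ : ℕ∞) G) :
    D2 (D1 G) = D1 (D2 G) := by
  funext p
  have hf : ∀ y, HasFDerivAt G (fderiv ℝ G y) y := fun y =>
    (hG.differentiable (by simp) y).hasFDerivAt
  have hfC : ContDiff ℝ (⊤ : ℕ∞) (fderiv ℝ G) :=
    hG.fderiv_right (by exact_mod_cast le_top)
  have hfd : HasFDerivAt (fderiv ℝ G) (fderiv ℝ (fderiv ℝ G) p) p :=
    (hfC.differentiable (by simp) p).hasFDerivAt
  have hsymm := second_derivative_symmetric hf hfd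
  have h1 : HasFDerivAt (D1 G)
      ((fderiv ℝ G p).comp (0 : ℝ × ℝ →L[ℝ] ℝ × ℝ)
        + (fderiv ℝ (fderiv ℝ G) p).flip ((1 : ℝ), (0 : ℝ))) p :=
    hfd.clm_apply (hasFDerivAt_const _ _)
  have h2 : HasFDerivAt (D2 G)
      ((fderiv ℝ G p).comp (0 : ℝ × ℝ →L[ℝ] ℝ × ℝ)
        + (fderiv ℝ (fderiv ℝ G) p).flip ((0 : ℝ), (1 : ℝ))) p :=
    hfd.clm_apply (hasFDerivAt_const _ _)
  have e1 : D2 (D1 G) p = fderiv ℝ (D1 G) p (0, 1) := rfl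
  have e2 : D1 (D2 G) p = fderiv ℝ (D2 G) p (1, 0) := rfl
  rw [e1, e2, h1.fderiv, h2.fderiv]
  simp only [ContinuousLinearMap.add_apply, ContinuousLinearMap.comp_apply,
    ContinuousLinearMap.zero_apply, map_zero, ContinuousLinearMap.flip_apply, zero_add]
  exact hsymm _ _

theorem D1_periodic {G : ℝ × ℝ → E} (hG : ContDiff ℝ (⊤ : ℕ∞) G)
    (hper : ∀ s t, G (s + 1, t) = G (s, t)) (s t : ℝ) :
    D1 G (s + 1, t) = D1 G (s, t) := by
  have h1 := hasDerivAt_fst hG (s + 1) t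
  have hshift : HasDerivAt (fun u : ℝ => u + 1) 1 s := (hasDerivAt_id s).add_const 1
  have h2 := h1.scomp s hshift
  rw [one_smul] at h2
  have h3 : ((fun u => G (u, t)) ∘ fun u : ℝ => u + 1) = fun u => G (u, t) :=
    funext fun u => hper u t
  rw [h3] at h2
  exact h2.unique (hasDerivAt_fst hG s t)

theorem D2_periodic {G : ℝ × ℝ → E} (hG : ContDiff ℝ (⊤ : ℕ∞) G)
    (hper : ∀ s t, G (s + 1, t) = G (s, t)) (s t : ℝ) :
    D2 G (s + 1, t) = D2 G (s, t) := by
  have h1 := hasDerivAt_snd hG (s + 1) t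
  have h3 : (fun τ => G (s + 1, τ)) = fun τ => G (s, τ) := funext fun τ => hper s τ
  rw [h3] at h1
  exact h1.unique (hasDerivAt_snd hG s t)

end ElastoAux

namespace ElastoAux

variable {F : Type*} [NormedAddCommGroup F] [InnerProductSpace ℝ F]

theorem cont_slice {G : ℝ × ℝ → F} (hG : Continuous G) (t : ℝ) :
    Continuous fun s => G (s, t) :=
  hG.comp (continuous_id.prodMk continuous_const)

theorem ibp {f g : ℝ × ℝ → F} (hf : ContDiff ℝ (⊤ : ℕ∞) f) (hg : ContDiff ℝ (⊤ : ℕ∞) g)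
    (hfp : ∀ s t, f (s + 1, t) = f (s, t)) (hgp : ∀ s t, g (s + 1, t) = g (s, t)) (t : ℝ) :
    ∫ s in (0:ℝ)..1, ⟪f (s, t), D1 g (s, t)⟫ = - ∫ s in (0:ℝ)..1, ⟪D1 f (s, t), g (s, t)⟫ := by
  have hA : Continuous fun s => ⟪f (s, t), D1 g (s, t)⟫ :=
    (cont_slice hf.continuous t).inner (cont_slice (contDiff_D1 hg).continuous t)
  have hB : Continuous fun s => ⟪D1 f (s, t), g (s, t)⟫ :=
    (cont_slice (contDiff_D1 hf).continuous t).inner (cont_slice hg.continuous t)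
  have hderiv : ∀ s ∈ uIcc (0:ℝ) 1,
      HasDerivAt (fun s => ⟪f (s, t), g (s, t)⟫)
        (⟪f (s, t), D1 g (s, t)⟫ + ⟪D1 f (s, t), g (s, t)⟫) s := fun s _ =>
    (hasDerivAt_fst hf s t).inner ℝ (hasDerivAt_fst hg s t)
  have h0 := intervalIntegral.integral_eq_sub_of_hasDerivAt hderiv
    ((hA.add hB).intervalIntegrable 0 1)
  have hbd : (⟪f (1, t), g (1, t)⟫ : ℝ) - ⟪f (0, t), g (0, t)⟫ = 0 := by
    have h1 : f (1, t) = f (0, t) := by simpa using hfp 0 t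
    have h2 : g (1, t) = g (0, t) := by simpa using hgp 0 t
    rw [h1, h2, sub_self]
  rw [hbd, intervalIntegral.integral_add (hA.intervalIntegrable 0 1)
    (hB.intervalIntegrable 0 1)] at h0
  linarith

theorem param_deriv {W : ℝ × ℝ → F} (hW : ContDiff ℝ (⊤ : ℕ∞) W) (t : ℝ) :
    HasDerivAt (fun τ => ∫ s in (0:ℝ)..1, ‖W (s, τ)‖ ^ 2)
      (∫ s in (0:ℝ)..1, 2 * ⟪W (s, t), D2 W (s, t)⟫) t := by
  have hWc : Continuous W := hW.continuous
  have hW2c : Continuous (D2 W) := (contDiff_D2 hW).continuous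
  have hφ : Continuous fun p : ℝ × ℝ => 2 * ⟪W p, D2 W p⟫ :=
    continuous_const.mul (hWc.inner hW2c)
  have hK : IsCompact (Icc (0:ℝ) 1 ×ˢ Icc (t - 1) (t + 1)) :=
    isCompact_Icc.prod isCompact_Icc
  obtain ⟨C, hC⟩ := hK.exists_bound_of_continuousOn hφ.continuousOn
  have key := intervalIntegral.hasDerivAt_integral_of_dominated_loc_of_deriv_le
    (F := fun x s => ‖W (s, x)‖ ^ 2) (F' := fun x s => 2 * ⟪W (s, x), D2 W (s, x)⟫)
    (x₀ := t) (a := 0) (b := 1) (bound := fun _ => C) (μ := volume) (Metric.ball_mem_nhds t one_pos)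
    (Filter.Eventually.of_forall fun x =>
      ((cont_slice hWc x).norm.pow 2).aestronglyMeasurable)
    (((cont_slice hWc t).norm.pow 2).intervalIntegrable 0 1)
    (continuous_const.mul ((cont_slice hWc t).inner
      (cont_slice hW2c t))).aestronglyMeasurable
    ?_ (intervalIntegrable_const) ?_
  · exact key.2
  · refine ae_of_all _ fun s hs x hx => ?_
    have hs' : s ∈ Icc (0:ℝ) 1 := by
      rcases hs with hs
      have := Set.uIoc_of_le (by norm_num : (0:ℝ) ≤ 1)
      rw [this] at hs
      exact ⟨le_of_lt hs.1, hs.2⟩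
    have hx' : x ∈ Icc (t - 1) (t + 1) := by
      rw [Real.ball_eq_Ioo] at hx
      exact ⟨le_of_lt hx.1, le_of_lt hx.2⟩
    exact hC (s, x) ⟨hs', hx'⟩
  · refine ae_of_all _ fun s _ x _ => ?_
    have h := (hasDerivAt_snd hW s x).inner ℝ (hasDerivAt_snd hW s x)
    have hfun : (fun τ => (⟪W (s, τ), W (s, τ)⟫ : ℝ)) = fun τ => ‖W (s, τ)‖ ^ 2 :=
      funext fun τ => real_inner_self_eq_norm_sq _
    rw [hfun] at h
    have e : (2 * ⟪W (s, x), D2 W (s, x)⟫ : ℝ)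
        = ⟪W (s, x), D2 W (s, x)⟫ + ⟪D2 W (s, x), W (s, x)⟫ := by
      rw [real_inner_comm (W (s,x)) (D2 W (s,x))]
      ring
    show HasDerivAt (fun τ => ‖W (s, τ)‖ ^ 2) (2 * ⟪W (s, x), D2 W (s, x)⟫) x
    rw [e]
    exact h

end ElastoAux

open ElastoAux

/-- energy identity for the closed-loop elastohydrodynamic curve
evolution. -/
theorem closed_loop_energy_identity (γ T : ℝ) (hγ : 0 ≤ γ) (hT : 0 < T)
    (X : ℝ → ℝ → E3) (lam : ℝ → ℝ → ℝ) (Z : ℝ → ℝ → E3)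
    (hX : ContDiff ℝ (⊤ : ℕ∞) (Function.uncurry X))
    (hlam : ContDiff ℝ (⊤ : ℕ∞) (Function.uncurry lam))
    (hXper : ∀ s t, X (s + 1) t = X s t)
    (hlamper : ∀ s t, lam (s + 1) t = lam s t)
    (hinext : ∀ (s : ℝ), ∀ t ∈ Icc (0:ℝ) T, ‖deriv (fun u => X u t) s‖ = 1)
    (hZ : ∀ s t, Z s t =
      iteratedDeriv 3 (fun u => X u t) s - lam s t • deriv (fun u => X u t) s)
    (hPDE : ∀ (s : ℝ), ∀ t ∈ Icc (0:ℝ) T,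
      deriv (X s) t =
        -(deriv (fun u => Z u t) s
          + (γ * ⟪deriv (fun u => X u t) s, deriv (fun u => Z u t) s⟫)
              • deriv (fun u => X u t) s)) :
    ∀ t ∈ Icc (0:ℝ) T,
      HasDerivAt
        (fun τ => (1/2) * ∫ s in (0:ℝ)..1, ‖iteratedDeriv 2 (fun u => X u τ) s‖ ^ 2)
        (-(∫ s in (0:ℝ)..1, ‖deriv (fun u => Z u t) s‖ ^ 2)
          - γ * ∫ s in (0:ℝ)..1,
              (⟪deriv (fun u => X u t) s, deriv (fun u => Z u t) s⟫) ^ 2)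
        t := by
  intro t ht
  set Fu : ℝ × ℝ → E3 := Function.uncurry X with hFu_def
  set Lu : ℝ × ℝ → ℝ := Function.uncurry lam with hLu_def
  have hF : ContDiff ℝ (⊤ : ℕ∞) Fu := hX
  have hL : ContDiff ℝ (⊤ : ℕ∞) Lu := hlam
  set Xs : ℝ × ℝ → E3 := D1 Fu with hXs_def
  set Xss : ℝ × ℝ → E3 := D1 Xs with hXss_def
  set Xsss : ℝ × ℝ → E3 := D1 Xss with hXsss_def
  set V : ℝ × ℝ → E3 := D2 Fu with hV_def
  set ZZ : ℝ × ℝ → E3 := fun p => Xsss p - Lu p • Xs p with hZZ_def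
  have hXsC : ContDiff ℝ (⊤ : ℕ∞) Xs := contDiff_D1 hF
  have hXssC : ContDiff ℝ (⊤ : ℕ∞) Xss := contDiff_D1 hXsC
  have hXsssC : ContDiff ℝ (⊤ : ℕ∞) Xsss := contDiff_D1 hXssC
  have hVC : ContDiff ℝ (⊤ : ℕ∞) V := contDiff_D2 hF
  have hZZC : ContDiff ℝ (⊤ : ℕ∞) ZZ := hXsssC.sub (hL.smul hXsC)
  -- conversions between `deriv`/`iteratedDeriv` slices and D1/D2
  have c1 : ∀ (s τ : ℝ), deriv (fun u => X u τ) s = Xs (s, τ) := fun s τ =>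
    (hasDerivAt_fst hF s τ).deriv
  have c1' : ∀ τ : ℝ, deriv (fun u => X u τ) = fun s => Xs (s, τ) := fun τ =>
    funext fun s => c1 s τ
  have c2 : ∀ (τ s : ℝ), iteratedDeriv 2 (fun u => X u τ) s = Xss (s, τ) := by
    intro τ s
    rw [show (2:ℕ) = 1 + 1 from rfl, iteratedDeriv_succ, iteratedDeriv_one, c1' τ]
    exact (hasDerivAt_fst hXsC s τ).deriv
  have c2' : ∀ τ : ℝ, (fun s => iteratedDeriv 2 (fun u => X u τ) s)
      = fun s => Xss (s, τ) := fun τ => funext fun s => c2 τ s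
  have c3 : ∀ (τ s : ℝ), iteratedDeriv 3 (fun u => X u τ) s = Xsss (s, τ) := by
    intro τ s
    have e2 : deriv (deriv (fun u => X u τ)) = fun s => Xss (s, τ) := by
      rw [c1' τ]
      exact funext fun s => (hasDerivAt_fst hXsC s τ).deriv
    have e3 : iteratedDeriv 3 (fun u => X u τ) = deriv (iteratedDeriv 2 (fun u => X u τ)) :=
      iteratedDeriv_succ
    have e4 : iteratedDeriv 2 (fun u => X u τ) = fun s => Xss (s, τ) :=
      funext fun s => c2 τ s
    rw [e3, e4]
    exact (hasDerivAt_fst hXssC s τ).deriv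
  have cZ : ∀ (s τ : ℝ), Z s τ = ZZ (s, τ) := by
    intro s τ
    rw [hZ s τ, c3 τ s, c1 s τ]
    rfl
  have c5 : ∀ (s τ : ℝ), deriv (fun u => Z u τ) s = D1 ZZ (s, τ) := by
    intro s τ
    have : (fun u => Z u τ) = fun u => ZZ (u, τ) := funext fun u => cZ u τ
    rw [this]
    exact (hasDerivAt_fst hZZC s τ).deriv
  have c6 : ∀ (s τ : ℝ), deriv (X s) τ = V (s, τ) := fun s τ =>
    (hasDerivAt_snd hF s τ).deriv
  -- periodicity
  have pF : ∀ s τ, Fu (s + 1, τ) = Fu (s, τ) := fun s τ => hXper s τ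
  have pXs : ∀ s τ, Xs (s + 1, τ) = Xs (s, τ) := D1_periodic hF pF
  have pXss : ∀ s τ, Xss (s + 1, τ) = Xss (s, τ) := D1_periodic hXsC pXs
  have pXsss : ∀ s τ, Xsss (s + 1, τ) = Xsss (s, τ) := D1_periodic hXssC pXss
  have pV : ∀ s τ, V (s + 1, τ) = V (s, τ) := D2_periodic hF pF
  have pZZ : ∀ s τ, ZZ (s + 1, τ) = ZZ (s, τ) := by
    intro s τ
    have hl : Lu (s + 1, τ) = Lu (s, τ) := hlamper s τ
    simp only [hZZ_def, pXsss, pXs, hl]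
  -- Clairaut
  have comm1 : D2 Xs = D1 V := D2_D1_comm hF
  have comm2 : D2 Xss = D1 (D1 V) := by
    rw [hXss_def, D2_D1_comm hXsC, comm1]
  -- main derivative of the energy
  have hmain := (param_deriv hXssC t).const_mul (1/2 : ℝ)
  have hfun : (fun τ => (1/2) * ∫ s in (0:ℝ)..1, ‖iteratedDeriv 2 (fun u => X u τ) s‖ ^ 2)
      = fun τ => (1/2) * ∫ s in (0:ℝ)..1, ‖Xss (s, τ)‖ ^ 2 := by
    funext τ
    simp only [c2]
  rw [hfun]
  -- identify the derivative value
  have hval : (1/2 : ℝ) * ∫ s in (0:ℝ)..1, 2 * ⟪Xss (s, t), D2 Xss (s, t)⟫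
      = -(∫ s in (0:ℝ)..1, ‖D1 ZZ (s, t)‖ ^ 2)
        - γ * ∫ s in (0:ℝ)..1, (⟪Xs (s, t), D1 ZZ (s, t)⟫) ^ 2 := by
    have pD1V : ∀ s τ, D1 V (s + 1, τ) = D1 V (s, τ) := D1_periodic hVC pV
    have ibp1 := ibp hXssC (contDiff_D1 hVC) pXss pD1V t
    have ibp2 := ibp hZZC hVC pZZ pV t
    -- the inextensibility constraint kills the tension term
    have hzero : ∀ s : ℝ, (⟪Xs (s, t), D1 V (s, t)⟫ : ℝ) = 0 := by
      intro s
      rw [← comm1]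
      have hXsc2 : Continuous fun τ => Xs (s, τ) :=
        hXsC.continuous.comp (continuous_const.prodMk continuous_id)
      have hD2c2 : Continuous fun τ => D2 Xs (s, τ) :=
        (contDiff_D2 hXsC).continuous.comp (continuous_const.prodMk continuous_id)
      have hcont : Continuous fun τ => (⟪Xs (s, τ), D2 Xs (s, τ)⟫ : ℝ) :=
        hXsc2.inner hD2c2
      have hEq : EqOn (fun τ => (⟪Xs (s, τ), D2 Xs (s, τ)⟫ : ℝ)) (fun _ => (0:ℝ))
          (Ioo 0 T) := by
        intro τ0 hτ0
        have hmem : Ioo (0:ℝ) T ∈ nhds τ0 := isOpen_Ioo.mem_nhds hτ0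
        have hne : (fun _ => (1:ℝ)) =ᶠ[nhds τ0]
            fun τ => (⟪Xs (s, τ), Xs (s, τ)⟫ : ℝ) := by
          filter_upwards [hmem] with τ hτ
          have h1 : ‖Xs (s, τ)‖ = 1 := by
            rw [← c1]; exact hinext s τ (Ioo_subset_Icc_self hτ)
          rw [real_inner_self_eq_norm_sq, h1]; norm_num
        have h1 := (hasDerivAt_snd hXsC s τ0).inner ℝ (hasDerivAt_snd hXsC s τ0)
        have h2 := h1.congr_of_eventuallyEq hne
        have h3 : HasDerivAt (fun _ : ℝ => (1:ℝ)) 0 τ0 := hasDerivAt_const _ _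
        have h4 := h2.unique h3
        have hcomm := real_inner_comm (Xs (s, τ0)) (D2 Xs (s, τ0))
        show (⟪Xs (s, τ0), D2 Xs (s, τ0)⟫ : ℝ) = 0
        linarith
      have hclos := hEq.closure hcont continuous_const
      have hmem : t ∈ closure (Ioo (0:ℝ) T) := by
        rw [closure_Ioo hT.ne]; exact ht
      exact hclos hmem
    -- split the third derivative as Z + λ X_s
    have hBsplit : (∫ s in (0:ℝ)..1, ⟪D1 Xss (s, t), D1 V (s, t)⟫)
        = ∫ s in (0:ℝ)..1, ⟪ZZ (s, t), D1 V (s, t)⟫ := by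
      have hpt : ∀ s : ℝ, (⟪D1 Xss (s, t), D1 V (s, t)⟫ : ℝ)
          = ⟪ZZ (s, t), D1 V (s, t)⟫ := by
        intro s
        have hx : D1 Xss (s, t) = ZZ (s, t) + Lu (s, t) • Xs (s, t) := by
          rw [hZZ_def]; simp [hXsss_def]
        rw [hx, inner_add_left, real_inner_smul_left, hzero s]
        ring
      simp only [hpt]
    -- plug in the PDE
    have hPDEp : ∀ s : ℝ, (⟪D1 ZZ (s, t), V (s, t)⟫ : ℝ)
        = -(‖D1 ZZ (s, t)‖ ^ 2) - γ * (⟪Xs (s, t), D1 ZZ (s, t)⟫ : ℝ) ^ 2 := by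
      intro s
      have h := hPDE s t ht
      rw [c6 s t, c5 s t, c1 s t] at h
      rw [h, inner_neg_right, inner_add_right, real_inner_smul_right,
        real_inner_comm (D1 ZZ (s, t)) (Xs (s, t)), real_inner_self_eq_norm_sq]
      ring
    have hNint : IntervalIntegrable (fun s => ‖D1 ZZ (s, t)‖ ^ 2) volume 0 1 :=
      ((cont_slice (contDiff_D1 hZZC).continuous t).norm.pow 2).intervalIntegrable 0 1
    have hPint : IntervalIntegrable
        (fun s => (⟪Xs (s, t), D1 ZZ (s, t)⟫ : ℝ) ^ 2) volume 0 1 :=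
      (((cont_slice hXsC.continuous t).inner
        (cont_slice (contDiff_D1 hZZC).continuous t)).pow 2).intervalIntegrable 0 1
    have hDq : (∫ s in (0:ℝ)..1, ⟪D1 ZZ (s, t), V (s, t)⟫)
        = -(∫ s in (0:ℝ)..1, ‖D1 ZZ (s, t)‖ ^ 2)
          - γ * ∫ s in (0:ℝ)..1, (⟪Xs (s, t), D1 ZZ (s, t)⟫ : ℝ) ^ 2 := by
      simp only [hPDEp]
      have hNneg : IntervalIntegrable (fun s => -(‖D1 ZZ (s, t)‖ ^ 2)) volume 0 1 :=
        hNint.neg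
      rw [intervalIntegral.integral_sub hNneg (hPint.const_mul γ),
        intervalIntegral.integral_neg, intervalIntegral.integral_const_mul]
    calc (1/2 : ℝ) * ∫ s in (0:ℝ)..1, 2 * ⟪Xss (s, t), D2 Xss (s, t)⟫
        = ∫ s in (0:ℝ)..1, ⟪Xss (s, t), D1 (D1 V) (s, t)⟫ := by
          simp only [comm2]
          rw [intervalIntegral.integral_const_mul]
          ring
      _ = - ∫ s in (0:ℝ)..1, ⟪D1 Xss (s, t), D1 V (s, t)⟫ := ibp1
      _ = - ∫ s in (0:ℝ)..1, ⟪ZZ (s, t), D1 V (s, t)⟫ := by rw [hBsplit]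
      _ = ∫ s in (0:ℝ)..1, ⟪D1 ZZ (s, t), V (s, t)⟫ := by rw [ibp2, neg_neg]
      _ = -(∫ s in (0:ℝ)..1, ‖D1 ZZ (s, t)‖ ^ 2)
            - γ * ∫ s in (0:ℝ)..1, (⟪Xs (s, t), D1 ZZ (s, t)⟫) ^ 2 := hDq
  have hgoal : (-(∫ s in (0:ℝ)..1, ‖deriv (fun u => Z u t) s‖ ^ 2)
      - γ * ∫ s in (0:ℝ)..1, (⟪deriv (fun u => X u t) s, deriv (fun u => Z u t) s⟫) ^ 2)
      = (1/2 : ℝ) * ∫ s in (0:ℝ)..1, 2 * ⟪Xss (s, t), D2 Xss (s, t)⟫ := by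
    rw [hval]
    simp only [c1, c5]
  rw [hgoal]
  exact hmain
end
end

section
/- Let γ ≥ 0, η > 0, α > 0, T > 0. Let X : ℝ × [0,T] → ℝ³, κ₃ : ℝ × [0,T] → ℝ, and λ : ℝ × [0,T] → ℝ be smooth and 1-periodic in s, with |∂_sX(s,t)| = 1 for all (s,t). Set W̃ := ∂_s³X − λ∂_sX − ηκ₃(∂_sX × ∂_s²X), and suppose ∂_tX = −(∂_sW̃ + γ(∂_sX·∂_sW̃)∂_sX) and ∂_tκ₃ = (∂_t∂_sX)·(∂_sX × ∂_s²X) + (η/α)∂_s²κ₃ on ℝ × [0,T]. Then for every t ∈ [0,T]: d/dt [(1/2)∫₀¹ (|∂_s²X|² + ηκ₃²) ds] = −∫₀¹ (|∂_sW̃|² + γ(∂_sX·∂_sW̃)²) ds − (η²/α)∫₀¹ (∂_sκ₃)² ds. -/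
open MeasureTheory Set
open Function
open scoped RealInnerProductSpace

noncomputable section

section Toolkit
variable {V : Type*} [NormedAddCommGroup V] [NormedSpace ℝ V]

/-- partial derivative in the first variable -/
def pd1 (F : ℝ → ℝ → V) (s t : ℝ) : V := deriv (fun u => F u t) s

/-- partial derivative in the second variable -/
def pd2 (F : ℝ → ℝ → V) (s t : ℝ) : V := deriv (fun τ => F s τ) t

theorem contDiff_slice1 {F : ℝ → ℝ → V} (hF : ContDiff ℝ (⊤ : ℕ∞) (uncurry F)) (t : ℝ) :
    ContDiff ℝ (⊤ : ℕ∞) (fun u => F u t) :=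
  hF.comp (contDiff_id.prodMk contDiff_const)

theorem contDiff_slice2 {F : ℝ → ℝ → V} (hF : ContDiff ℝ (⊤ : ℕ∞) (uncurry F)) (s : ℝ) :
    ContDiff ℝ (⊤ : ℕ∞) (fun τ => F s τ) :=
  hF.comp (contDiff_const.prodMk contDiff_id)

theorem hasDerivAt_pd1 {F : ℝ → ℝ → V} (hF : ContDiff ℝ (⊤ : ℕ∞) (uncurry F)) (s t : ℝ) :
    HasDerivAt (fun u => F u t) (pd1 F s t) s :=
  (((contDiff_slice1 hF t).differentiable (by simp)) s).hasDerivAt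

theorem hasDerivAt_pd2 {F : ℝ → ℝ → V} (hF : ContDiff ℝ (⊤ : ℕ∞) (uncurry F)) (s t : ℝ) :
    HasDerivAt (fun τ => F s τ) (pd2 F s t) t :=
  (((contDiff_slice2 hF s).differentiable (by simp)) t).hasDerivAt

theorem pd1_eq_fderiv {F : ℝ → ℝ → V} (hF : ContDiff ℝ (⊤ : ℕ∞) (uncurry F)) (s t : ℝ) :
    pd1 F s t = fderiv ℝ (uncurry F) (s, t) (1, 0) := by
  have h1 : HasDerivAt (fun u : ℝ => (u, t)) ((1 : ℝ), (0 : ℝ)) s :=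
    (hasDerivAt_id s).prodMk (hasDerivAt_const s t)
  have h2 : HasFDerivAt (uncurry F) (fderiv ℝ (uncurry F) (s, t)) (s, t) :=
    (hF.differentiable (by simp) (s, t)).hasFDerivAt
  have h3 : HasDerivAt (fun u => F u t) (fderiv ℝ (uncurry F) (s, t) (1, 0)) s := by
    have := h2.comp_hasDerivAt s h1; exact this
  exact h3.unique (hasDerivAt_pd1 hF s t) ▸ rfl

theorem pd2_eq_fderiv {F : ℝ → ℝ → V} (hF : ContDiff ℝ (⊤ : ℕ∞) (uncurry F)) (s t : ℝ) :
    pd2 F s t = fderiv ℝ (uncurry F) (s, t) (0, 1) := by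
  have h1 : HasDerivAt (fun τ : ℝ => (s, τ)) ((0 : ℝ), (1 : ℝ)) t :=
    (hasDerivAt_const t s).prodMk (hasDerivAt_id t)
  have h2 : HasFDerivAt (uncurry F) (fderiv ℝ (uncurry F) (s, t)) (s, t) :=
    (hF.differentiable (by simp) (s, t)).hasFDerivAt
  exact ((hasDerivAt_pd2 hF s t).unique (h2.comp_hasDerivAt t h1))

theorem contDiff_pd1 {F : ℝ → ℝ → V} (hF : ContDiff ℝ (⊤ : ℕ∞) (uncurry F)) :
    ContDiff ℝ (⊤ : ℕ∞) (uncurry (pd1 F)) := by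
  have : uncurry (pd1 F) = fun p : ℝ × ℝ => fderiv ℝ (uncurry F) p (1, 0) := by
    funext p
    exact pd1_eq_fderiv hF p.1 p.2
  rw [this]
  exact (hF.fderiv_right (m := (⊤ : ℕ∞)) (by exact_mod_cast le_top)).clm_apply contDiff_const

theorem contDiff_pd2 {F : ℝ → ℝ → V} (hF : ContDiff ℝ (⊤ : ℕ∞) (uncurry F)) :
    ContDiff ℝ (⊤ : ℕ∞) (uncurry (pd2 F)) := by
  have : uncurry (pd2 F) = fun p : ℝ × ℝ => fderiv ℝ (uncurry F) p (0, 1) := by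
    funext p
    exact pd2_eq_fderiv hF p.1 p.2
  rw [this]
  exact (hF.fderiv_right (m := (⊤ : ℕ∞)) (by exact_mod_cast le_top)).clm_apply contDiff_const

theorem pd_comm {F : ℝ → ℝ → V} (hF : ContDiff ℝ (⊤ : ℕ∞) (uncurry F)) (s t : ℝ) :
    pd1 (pd2 F) s t = pd2 (pd1 F) s t := by
  set f := uncurry F
  have hdiff : ∀ y, HasFDerivAt f (fderiv ℝ f y) y := fun y =>
    (hF.differentiable (by simp) y).hasFDerivAt
  have hf' : HasFDerivAt (fderiv ℝ f) (fderiv ℝ (fderiv ℝ f) (s, t)) (s, t) := by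
    have : Differentiable ℝ (fderiv ℝ f) :=
      (hF.fderiv_right (m := (⊤ : ℕ∞)) (by exact_mod_cast le_top)).differentiable (by simp)
    exact (this (s, t)).hasFDerivAt
  have hsymm := second_derivative_symmetric hdiff hf' ((1 : ℝ), (0 : ℝ)) ((0 : ℝ), (1 : ℝ))
  -- pd1 (pd2 F) s t = fderiv (fun p => fderiv f p (0,1)) (s,t) (1,0)
  have e1 : pd1 (pd2 F) s t = fderiv ℝ (uncurry (pd2 F)) (s, t) (1, 0) :=
    pd1_eq_fderiv (contDiff_pd2 hF) s t
  have e2 : pd2 (pd1 F) s t = fderiv ℝ (uncurry (pd1 F)) (s, t) (0, 1) :=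
    pd2_eq_fderiv (contDiff_pd1 hF) s t
  have u2 : uncurry (pd2 F) = fun p : ℝ × ℝ => fderiv ℝ f p (0, 1) := by
    funext p; exact pd2_eq_fderiv hF p.1 p.2
  have u1 : uncurry (pd1 F) = fun p : ℝ × ℝ => fderiv ℝ f p (1, 0) := by
    funext p; exact pd1_eq_fderiv hF p.1 p.2
  have c2 : HasFDerivAt (fun p : ℝ × ℝ => fderiv ℝ f p (0, 1))
      ((ContinuousLinearMap.apply ℝ V ((0 : ℝ), (1 : ℝ))).comp
        (fderiv ℝ (fderiv ℝ f) (s, t))) (s, t) :=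
    (ContinuousLinearMap.apply ℝ V ((0 : ℝ), (1 : ℝ))).hasFDerivAt.comp (s, t) hf'
  have c1 : HasFDerivAt (fun p : ℝ × ℝ => fderiv ℝ f p (1, 0))
      ((ContinuousLinearMap.apply ℝ V ((1 : ℝ), (0 : ℝ))).comp
        (fderiv ℝ (fderiv ℝ f) (s, t))) (s, t) :=
    (ContinuousLinearMap.apply ℝ V ((1 : ℝ), (0 : ℝ))).hasFDerivAt.comp (s, t) hf'
  rw [e1, e2, u1, u2, c1.fderiv, c2.fderiv]
  simpa using hsymm

theorem pd1_per {F : ℝ → ℝ → V} (hper : ∀ s t, F (s + 1) t = F s t) (s t : ℝ) :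
    pd1 F (s + 1) t = pd1 F s t := by
  unfold pd1
  rw [← deriv_comp_add_const (fun u => F u t) 1 s]
  congr 1
  funext u
  exact hper u t

theorem pd2_per {F : ℝ → ℝ → V} (hper : ∀ s t, F (s + 1) t = F s t) (s t : ℝ) :
    pd2 F (s + 1) t = pd2 F s t := by
  unfold pd2
  congr 1
  funext τ
  exact hper s τ

section IP
variable {H : Type*} [NormedAddCommGroup H] [InnerProductSpace ℝ H]

/-- Integration by parts on [0,1] with matching endpoints (no boundary term). -/
theorem ibp_inner (f g : ℝ → H) (hf : ContDiff ℝ (⊤ : ℕ∞) f) (hg : ContDiff ℝ (⊤ : ℕ∞) g)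
    (hf0 : f 1 = f 0) (hg0 : g 1 = g 0) :
    ∫ s in (0:ℝ)..1, ⟪deriv f s, g s⟫ = -∫ s in (0:ℝ)..1, ⟪f s, deriv g s⟫ := by
  have hfd : Differentiable ℝ f := hf.differentiable (by simp)
  have hgd : Differentiable ℝ g := hg.differentiable (by simp)
  have hfc : Continuous (deriv f) := hf.continuous_deriv (by exact_mod_cast le_top)
  have hgc : Continuous (deriv g) := hg.continuous_deriv (by exact_mod_cast le_top)
  have key : ∀ s : ℝ, HasDerivAt (fun u => (⟪f u, g u⟫ : ℝ))
      (⟪f s, deriv g s⟫ + ⟪deriv f s, g s⟫) s := fun s =>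
    (hfd s).hasDerivAt.inner ℝ (hgd s).hasDerivAt
  have hint : ∫ s in (0:ℝ)..1, (⟪f s, deriv g s⟫ + ⟪deriv f s, g s⟫)
      = ⟪f 1, g 1⟫ - ⟪f 0, g 0⟫ := by
    refine intervalIntegral.integral_eq_sub_of_hasDerivAt (fun s _ => key s) ?_
    apply Continuous.intervalIntegrable
    exact (hf.continuous.inner hgc).add (hfc.inner hg.continuous)
  rw [hf0, hg0, sub_self] at hint
  have h1 : IntervalIntegrable (fun s => (⟪f s, deriv g s⟫ : ℝ)) volume 0 1 :=
    (hf.continuous.inner hgc).intervalIntegrable 0 1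
  have h2 : IntervalIntegrable (fun s => (⟪deriv f s, g s⟫ : ℝ)) volume 0 1 :=
    (hfc.inner hg.continuous).intervalIntegrable 0 1
  rw [intervalIntegral.integral_add h1 h2] at hint
  linarith

end IP

theorem ibp_mul (f g : ℝ → ℝ) (hf : ContDiff ℝ (⊤ : ℕ∞) f) (hg : ContDiff ℝ (⊤ : ℕ∞) g)
    (hf0 : f 1 = f 0) (hg0 : g 1 = g 0) :
    ∫ s in (0:ℝ)..1, deriv f s * g s = -∫ s in (0:ℝ)..1, f s * deriv g s := by
  have := ibp_inner (H := ℝ) f g hf hg hf0 hg0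
  simp only [RCLike.inner_apply, conj_trivial] at this
  simpa only [mul_comm] using this

/-- Differentiation under the interval integral for a smooth integrand. -/
theorem hasDerivAt_param_integral (G : ℝ → ℝ → ℝ) (hG : ContDiff ℝ (⊤ : ℕ∞) (uncurry G))
    (t : ℝ) :
    HasDerivAt (fun τ => ∫ s in (0:ℝ)..1, G s τ) (∫ s in (0:ℝ)..1, pd2 G s t) t := by
  have hpd2 : ContDiff ℝ (⊤ : ℕ∞) (uncurry (pd2 G)) := contDiff_pd2 hG
  -- bound on a compact set
  obtain ⟨C, hC⟩ : ∃ C, ∀ p ∈ (Icc (0:ℝ) 1) ×ˢ (Icc (t - 1) (t + 1)),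
      ‖uncurry (pd2 G) p‖ ≤ C := by
    rcases (isCompact_Icc.prod isCompact_Icc).exists_bound_of_continuousOn
      hpd2.continuous.continuousOn with ⟨C, hC⟩
    exact ⟨C, hC⟩
  have main := intervalIntegral.hasDerivAt_integral_of_dominated_loc_of_deriv_le
    (F := fun τ s => G s τ) (F' := fun τ s => pd2 G s τ) (x₀ := t) (a := 0) (b := 1)
    (μ := volume) (bound := fun _ => C) (Metric.ball_mem_nhds t one_pos)
    (Filter.Eventually.of_forall fun τ =>
      ((contDiff_slice1 hG τ).continuous.aestronglyMeasurable))
    ((contDiff_slice1 hG t).continuous.intervalIntegrable 0 1)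
    ((contDiff_slice1 hpd2 t).continuous.aestronglyMeasurable)
    (Filter.Eventually.of_forall fun s hs τ hτ => by
      have hs' : s ∈ Icc (0:ℝ) 1 := by
        rw [uIoc_of_le (by norm_num : (0:ℝ) ≤ 1)] at hs
        exact ⟨le_of_lt hs.1, hs.2⟩
      have hτ' : τ ∈ Icc (t - 1) (t + 1) := by
        rw [Metric.mem_ball, Real.dist_eq, abs_lt] at hτ
        constructor <;> linarith [hτ.1, hτ.2]
      exact hC (s, τ) ⟨hs', hτ'⟩)
    (Continuous.intervalIntegrable continuous_const 0 1)
    (Filter.Eventually.of_forall fun s _ τ _ => hasDerivAt_pd2 hG s τ)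
  exact main.2


theorem contDiff_cross3_s11 : ContDiff ℝ (⊤ : ℕ∞) (fun p : E3 × E3 => cross3 p.1 p.2) := by
  unfold cross3
  apply (ContinuousLinearEquiv.contDiff _).comp
  have hcoord : ∀ i : Fin 3, ContDiff ℝ (⊤ : ℕ∞) (fun p : E3 × E3 => p.1 i) := fun i =>
    (EuclideanSpace.proj i : E3 →L[ℝ] ℝ).contDiff.comp contDiff_fst
  have hcoord2 : ∀ i : Fin 3, ContDiff ℝ (⊤ : ℕ∞) (fun p : E3 × E3 => p.2 i) := fun i =>
    (EuclideanSpace.proj i : E3 →L[ℝ] ℝ).contDiff.comp contDiff_snd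
  rw [contDiff_pi]
  intro i
  fin_cases i <;>
    simp only [Matrix.cons_val_zero, Matrix.cons_val_one, Matrix.head_cons,
      Matrix.cons_val_two, Matrix.tail_cons] <;>
    exact ((hcoord _).mul (hcoord2 _)).sub ((hcoord _).mul (hcoord2 _))

end Toolkit

/-- energy identity for the closed immersed Kirchhoff rod
evolution. -/
theorem closed_rod_energy_identity (γ η α T : ℝ)
    (hγ : 0 ≤ γ) (hη : 0 < η) (hα : 0 < α) (hT : 0 < T)
    (X : ℝ → ℝ → E3) (κ₃ lam : ℝ → ℝ → ℝ) (W : ℝ → ℝ → E3)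
    (hX : ContDiff ℝ (⊤ : ℕ∞) (Function.uncurry X))
    (hκ : ContDiff ℝ (⊤ : ℕ∞) (Function.uncurry κ₃))
    (hlam : ContDiff ℝ (⊤ : ℕ∞) (Function.uncurry lam))
    (hXper : ∀ s t, X (s + 1) t = X s t)
    (hκper : ∀ s t, κ₃ (s + 1) t = κ₃ s t)
    (hlamper : ∀ s t, lam (s + 1) t = lam s t)
    (hinext : ∀ (s : ℝ), ∀ t ∈ Icc (0:ℝ) T, ‖deriv (fun u => X u t) s‖ = 1)
    (hW : ∀ s t, W s t =
      iteratedDeriv 3 (fun u => X u t) s - lam s t • deriv (fun u => X u t) s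
        - (η * κ₃ s t) • cross3 (deriv (fun u => X u t) s)
            (iteratedDeriv 2 (fun u => X u t) s))
    (hPDE1 : ∀ (s : ℝ), ∀ t ∈ Icc (0:ℝ) T,
      deriv (X s) t =
        -(deriv (fun u => W u t) s
          + (γ * ⟪deriv (fun u => X u t) s, deriv (fun u => W u t) s⟫)
              • deriv (fun u => X u t) s))
    (hPDE2 : ∀ (s : ℝ), ∀ t ∈ Icc (0:ℝ) T,
      deriv (fun τ => κ₃ s τ) t =
        ⟪deriv (fun τ => deriv (fun u => X u τ) s) t,
          cross3 (deriv (fun u => X u t) s) (iteratedDeriv 2 (fun u => X u t) s)⟫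
        + (η / α) * iteratedDeriv 2 (fun u => κ₃ u t) s) :
    ∀ t ∈ Icc (0:ℝ) T,
      HasDerivAt
        (fun τ => (1/2) * ∫ s in (0:ℝ)..1,
          (‖iteratedDeriv 2 (fun u => X u τ) s‖ ^ 2 + η * (κ₃ s τ) ^ 2))
        (-(∫ s in (0:ℝ)..1,
            (‖deriv (fun u => W u t) s‖ ^ 2
              + γ * (⟪deriv (fun u => X u t) s, deriv (fun u => W u t) s⟫) ^ 2))
          - (η ^ 2 / α) * ∫ s in (0:ℝ)..1, (deriv (fun u => κ₃ u t) s) ^ 2)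
        t := by
  intro t ht
  -- smoothness of partial derivatives
  have hXs : ContDiff ℝ (⊤ : ℕ∞) (uncurry (pd1 X)) := contDiff_pd1 hX
  have hXss : ContDiff ℝ (⊤ : ℕ∞) (uncurry (pd1 (pd1 X))) := contDiff_pd1 hXs
  have hXsss : ContDiff ℝ (⊤ : ℕ∞) (uncurry (pd1 (pd1 (pd1 X)))) := contDiff_pd1 hXss
  have hXt : ContDiff ℝ (⊤ : ℕ∞) (uncurry (pd2 X)) := contDiff_pd2 hX
  have hXsst : ContDiff ℝ (⊤ : ℕ∞) (uncurry (pd2 (pd1 (pd1 X)))) := contDiff_pd2 hXss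
  have hpd2Xs : ContDiff ℝ (⊤ : ℕ∞) (uncurry (pd2 (pd1 X))) := contDiff_pd2 hXs
  have hκs : ContDiff ℝ (⊤ : ℕ∞) (uncurry (pd1 κ₃)) := contDiff_pd1 hκ
  have hκss : ContDiff ℝ (⊤ : ℕ∞) (uncurry (pd1 (pd1 κ₃))) := contDiff_pd1 hκs
  -- iterated derivative identities
  have r2 : ∀ (τ s : ℝ), iteratedDeriv 2 (fun u => X u τ) s = pd1 (pd1 X) s τ := by
    intro τ s
    rw [iteratedDeriv_succ, iteratedDeriv_one]
    rfl
  have r3 : ∀ (τ s : ℝ), iteratedDeriv 3 (fun u => X u τ) s = pd1 (pd1 (pd1 X)) s τ := by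
    intro τ s
    rw [iteratedDeriv_succ, iteratedDeriv_succ, iteratedDeriv_one]
    rfl
  have rκ2 : ∀ (τ s : ℝ), iteratedDeriv 2 (fun u => κ₃ u τ) s = pd1 (pd1 κ₃) s τ := by
    intro τ s
    rw [iteratedDeriv_succ, iteratedDeriv_one]
    rfl
  -- periodicity facts
  have hp1 : ∀ s t, pd1 X (s + 1) t = pd1 X s t := pd1_per hXper
  have hp2 : ∀ s t, pd1 (pd1 X) (s + 1) t = pd1 (pd1 X) s t := pd1_per hp1
  have hp3 : ∀ s t, pd1 (pd1 (pd1 X)) (s + 1) t = pd1 (pd1 (pd1 X)) s t := pd1_per hp2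
  have hpt : ∀ s t, pd2 X (s + 1) t = pd2 X s t := pd2_per hXper
  have hpst : ∀ s t, pd1 (pd2 X) (s + 1) t = pd1 (pd2 X) s t := pd1_per hpt
  have hpκ : ∀ s t, pd1 κ₃ (s + 1) t = pd1 κ₃ s t := pd1_per hκper
  -- W facts
  have hWeq : ∀ s, W s t = pd1 (pd1 (pd1 X)) s t - lam s t • pd1 X s t
      - (η * κ₃ s t) • cross3 (pd1 X s t) (pd1 (pd1 X) s t) := by
    intro s
    rw [hW s t, r3, r2]
    rfl
  have hWf : ContDiff ℝ (⊤ : ℕ∞) (fun s => W s t) := by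
    have : (fun s => W s t) = fun s => pd1 (pd1 (pd1 X)) s t - lam s t • pd1 X s t
        - (η * κ₃ s t) • cross3 (pd1 X s t) (pd1 (pd1 X) s t) := funext hWeq
    rw [this]
    refine ContDiff.sub (ContDiff.sub (contDiff_slice1 hXsss t)
      ((contDiff_slice1 hlam t).smul (contDiff_slice1 hXs t))) ?_
    exact (contDiff_const.mul (contDiff_slice1 hκ t)).smul
      (contDiff_cross3_s11.comp ((contDiff_slice1 hXs t).prodMk (contDiff_slice1 hXss t)))
  have hWper : ∀ s, W (s + 1) t = W s t := by
    intro s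
    rw [hWeq, hWeq, hp3, hp2, hp1, hκper, hlamper]
  -- mixed partial commutation
  have hcomm1 : ∀ s, pd1 (pd2 X) s t = pd2 (pd1 X) s t := fun s => pd_comm hX s t
  have hswap : pd2 (pd1 X) = pd1 (pd2 X) := by
    funext u v
    exact (pd_comm hX u v).symm
  have hcomm2 : ∀ s, pd2 (pd1 (pd1 X)) s t = pd1 (pd1 (pd2 X)) s t := by
    intro s
    rw [← pd_comm hXs s t, hswap]
  -- orthogonality from inextensibility
  have horth : ∀ s, ⟪pd1 X s t, pd2 (pd1 X) s t⟫ = 0 := by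
    intro s
    have hone : ∀ τ ∈ Icc (0:ℝ) T, ‖pd1 X s τ‖ ^ 2 = 1 := by
      intro τ hτ
      have := hinext s τ hτ
      rw [show deriv (fun u => X u τ) s = pd1 X s τ from rfl] at this
      rw [this, one_pow]
    have hd : HasDerivAt (fun τ => ‖pd1 X s τ‖ ^ 2)
        (2 * ⟪pd1 X s t, pd2 (pd1 X) s t⟫) t := (hasDerivAt_pd2 hXs s t).norm_sq
    have hud : UniqueDiffWithinAt ℝ (Icc (0:ℝ) T) t := (uniqueDiffOn_Icc hT) t ht
    have h1 := (hd.hasDerivWithinAt (s := Icc (0:ℝ) T)).derivWithin hud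
    have h2 : HasDerivWithinAt (fun τ => ‖pd1 X s τ‖ ^ 2) 0 (Icc (0:ℝ) T) t :=
      (hasDerivWithinAt_const t (Icc (0:ℝ) T) (1:ℝ)).congr
        (fun τ hτ => hone τ hτ) (hone t ht)
    have := h1.symm.trans (h2.derivWithin hud)
    linarith
  -- PDE2 rewritten
  have hinner_c : ∀ s, ⟪cross3 (pd1 X s t) (pd1 (pd1 X) s t), pd2 (pd1 X) s t⟫
      = pd2 κ₃ s t - (η / α) * pd1 (pd1 κ₃) s t := by
    intro s
    have h := hPDE2 s t ht
    rw [rκ2, r2] at h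
    rw [show deriv (fun τ => κ₃ s τ) t = pd2 κ₃ s t from rfl,
      show deriv (fun τ => deriv (fun u => X u τ) s) t = pd2 (pd1 X) s t from rfl,
      show deriv (fun u => X u t) s = pd1 X s t from rfl] at h
    rw [real_inner_comm]
    linarith
  -- hW rearranged
  have hXsss_eq : ∀ s, pd1 (pd1 (pd1 X)) s t = W s t + lam s t • pd1 X s t
      + (η * κ₃ s t) • cross3 (pd1 X s t) (pd1 (pd1 X) s t) := by
    intro s
    rw [hWeq s]
    abel
  -- PDE1 rewritten
  have hPDE1' : ∀ s, pd2 X s t = -(pd1 W s t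
      + (γ * ⟪pd1 X s t, pd1 W s t⟫) • pd1 X s t) := by
    intro s
    exact hPDE1 s t ht
  -- continuity of slices at time t
  have cXs : Continuous (fun s => pd1 X s t) := (contDiff_slice1 hXs t).continuous
  have cXss : Continuous (fun s => pd1 (pd1 X) s t) := (contDiff_slice1 hXss t).continuous
  have cXsss : Continuous (fun s => pd1 (pd1 (pd1 X)) s t) :=
    (contDiff_slice1 hXsss t).continuous
  have cXsst : Continuous (fun s => pd2 (pd1 (pd1 X)) s t) :=
    (contDiff_slice1 hXsst t).continuous
  have cpd2Xs : Continuous (fun s => pd2 (pd1 X) s t) := (contDiff_slice1 hpd2Xs t).continuous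
  have cXt : Continuous (fun s => pd2 X s t) := (contDiff_slice1 hXt t).continuous
  have cκf : Continuous (fun s => κ₃ s t) := (contDiff_slice1 hκ t).continuous
  have cκt : Continuous (fun s => pd2 κ₃ s t) := (contDiff_slice1 (contDiff_pd2 hκ) t).continuous
  have cκs : Continuous (fun s => pd1 κ₃ s t) := (contDiff_slice1 hκs t).continuous
  have cκss : Continuous (fun s => pd1 (pd1 κ₃) s t) := (contDiff_slice1 hκss t).continuous
  have cWc : Continuous (fun s => W s t) := hWf.continuous
  have cWs : Continuous (fun s => pd1 W s t) := hWf.continuous_deriv (by exact_mod_cast le_top)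
  -- the energy density
  set e : ℝ → ℝ → ℝ := fun s τ => ‖pd1 (pd1 X) s τ‖ ^ 2 + η * (κ₃ s τ) ^ 2 with he_def
  have he : ContDiff ℝ (⊤ : ℕ∞) (uncurry e) := by
    have : uncurry e = fun p : ℝ × ℝ =>
        ‖uncurry (pd1 (pd1 X)) p‖ ^ 2 + η * (uncurry κ₃ p) ^ 2 := rfl
    rw [this]
    exact (hXss.norm_sq (𝕜 := ℝ)).add (contDiff_const.mul (hκ.pow 2))
  have hDUI : HasDerivAt (fun τ => ∫ s in (0:ℝ)..1, e s τ)
      (∫ s in (0:ℝ)..1, pd2 e s t) t := hasDerivAt_param_integral e he t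
  -- compute pd2 e
  have hpd2e : ∀ s, pd2 e s t
      = 2 * ⟪pd1 (pd1 X) s t, pd2 (pd1 (pd1 X)) s t⟫
        + 2 * η * (κ₃ s t * pd2 κ₃ s t) := by
    intro s
    have h1 : HasDerivAt (fun τ => e s τ)
        (2 * ⟪pd1 (pd1 X) s t, pd2 (pd1 (pd1 X)) s t⟫
          + 2 * η * (κ₃ s t * pd2 κ₃ s t)) t := by
      have ha := (hasDerivAt_pd2 hXss s t).norm_sq
      have hb := ((hasDerivAt_pd2 hκ s t).fun_pow 2).const_mul η
      have hab := ha.add hb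
      exact hab.congr_deriv (by ring)
    exact h1.deriv
  -- rewrite the goal's function
  have hfun_eq : (fun τ => (1/2 : ℝ) * ∫ s in (0:ℝ)..1,
      (‖iteratedDeriv 2 (fun u => X u τ) s‖ ^ 2 + η * (κ₃ s τ) ^ 2))
      = fun τ => (1/2 : ℝ) * ∫ s in (0:ℝ)..1, e s τ := by
    funext τ
    congr 1
    exact intervalIntegral.integral_congr fun s _ => by rw [r2]
  -- integrability
  have II1 : IntervalIntegrable
      (fun s => 2 * ⟪pd1 (pd1 X) s t, pd2 (pd1 (pd1 X)) s t⟫) volume 0 1 :=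
    (continuous_const.mul (cXss.inner cXsst)).intervalIntegrable 0 1
  have II2 : IntervalIntegrable (fun s => 2 * η * (κ₃ s t * pd2 κ₃ s t)) volume 0 1 :=
    (continuous_const.mul (cκf.mul cκt)).intervalIntegrable 0 1
  have II3 : IntervalIntegrable (fun s => ⟪W s t, pd2 (pd1 X) s t⟫) volume 0 1 :=
    (cWc.inner cpd2Xs).intervalIntegrable 0 1
  have II4 : IntervalIntegrable (fun s => η * (κ₃ s t
      * (pd2 κ₃ s t - (η / α) * pd1 (pd1 κ₃) s t))) volume 0 1 :=
    (continuous_const.mul (cκf.mul (cκt.sub (continuous_const.mul cκss)))).intervalIntegrable 0 1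
  have II5 : IntervalIntegrable (fun s => κ₃ s t * pd2 κ₃ s t) volume 0 1 :=
    (cκf.mul cκt).intervalIntegrable 0 1
  have II6 : IntervalIntegrable (fun s => (η / α) * (κ₃ s t * pd1 (pd1 κ₃) s t)) volume 0 1 :=
    (continuous_const.mul (cκf.mul cκss)).intervalIntegrable 0 1
  -- h1 : the integral of pd2 e
  have h1 : ∫ s in (0:ℝ)..1, pd2 e s t
      = 2 * (∫ s in (0:ℝ)..1, ⟪pd1 (pd1 X) s t, pd2 (pd1 (pd1 X)) s t⟫)
        + 2 * η * (∫ s in (0:ℝ)..1, κ₃ s t * pd2 κ₃ s t) := by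
    have step : ∫ s in (0:ℝ)..1, pd2 e s t = ∫ s in (0:ℝ)..1,
        (2 * ⟪pd1 (pd1 X) s t, pd2 (pd1 (pd1 X)) s t⟫
          + 2 * η * (κ₃ s t * pd2 κ₃ s t)) :=
      intervalIntegral.integral_congr fun s _ => hpd2e s
    rw [step, intervalIntegral.integral_add II1 II2,
      intervalIntegral.integral_const_mul, intervalIntegral.integral_const_mul]
  -- h2 : integration by parts on the bending term
  have h2 : (∫ s in (0:ℝ)..1, ⟪pd1 (pd1 X) s t, pd2 (pd1 (pd1 X)) s t⟫)
      = -∫ s in (0:ℝ)..1, ⟪pd1 (pd1 (pd1 X)) s t, pd2 (pd1 X) s t⟫ := by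
    have hibp := ibp_inner (fun u => pd1 (pd1 X) u t) (fun u => pd1 (pd2 X) u t)
      (contDiff_slice1 hXss t) (contDiff_slice1 (contDiff_pd1 hXt) t)
      (by simpa using hp2 0 t) (by simpa using hpst 0 t)
    have hibp' : (∫ s in (0:ℝ)..1, ⟪pd1 (pd1 (pd1 X)) s t, pd1 (pd2 X) s t⟫)
        = -∫ s in (0:ℝ)..1, ⟪pd1 (pd1 X) s t, pd1 (pd1 (pd2 X)) s t⟫ := hibp
    have hL : (∫ s in (0:ℝ)..1, ⟪pd1 (pd1 (pd1 X)) s t, pd1 (pd2 X) s t⟫)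
        = ∫ s in (0:ℝ)..1, ⟪pd1 (pd1 (pd1 X)) s t, pd2 (pd1 X) s t⟫ :=
      intervalIntegral.integral_congr fun s _ => by rw [hcomm1 s]
    have hR : (∫ s in (0:ℝ)..1, ⟪pd1 (pd1 X) s t, pd1 (pd1 (pd2 X)) s t⟫)
        = ∫ s in (0:ℝ)..1, ⟪pd1 (pd1 X) s t, pd2 (pd1 (pd1 X)) s t⟫ :=
      intervalIntegral.integral_congr fun s _ => by rw [hcomm2 s]
    linarith [hibp', hL, hR]
  -- h3 : expand Xsss via W
  have h3 : (∫ s in (0:ℝ)..1, ⟪pd1 (pd1 (pd1 X)) s t, pd2 (pd1 X) s t⟫)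
      = (∫ s in (0:ℝ)..1, ⟪W s t, pd2 (pd1 X) s t⟫)
        + η * ∫ s in (0:ℝ)..1,
            (κ₃ s t * (pd2 κ₃ s t - (η / α) * pd1 (pd1 κ₃) s t)) := by
    have hptw : ∀ s : ℝ, ⟪pd1 (pd1 (pd1 X)) s t, pd2 (pd1 X) s t⟫
        = ⟪W s t, pd2 (pd1 X) s t⟫
          + η * (κ₃ s t * (pd2 κ₃ s t - (η / α) * pd1 (pd1 κ₃) s t)) := by
      intro s
      rw [hXsss_eq s, inner_add_left, inner_add_left, real_inner_smul_left,
        real_inner_smul_left, horth s, hinner_c s]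
      ring
    have step := intervalIntegral.integral_congr
      (f := fun s => ⟪pd1 (pd1 (pd1 X)) s t, pd2 (pd1 X) s t⟫)
      (g := fun s => ⟪W s t, pd2 (pd1 X) s t⟫
        + η * (κ₃ s t * (pd2 κ₃ s t - (η / α) * pd1 (pd1 κ₃) s t)))
      (a := 0) (b := 1) (μ := volume) (fun s _ => hptw s)
    rw [step, intervalIntegral.integral_add II3 II4, intervalIntegral.integral_const_mul]
  -- h4 : split the twist term
  have h4 : (∫ s in (0:ℝ)..1, (κ₃ s t * (pd2 κ₃ s t - (η / α) * pd1 (pd1 κ₃) s t)))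
      = (∫ s in (0:ℝ)..1, κ₃ s t * pd2 κ₃ s t)
        - (η / α) * ∫ s in (0:ℝ)..1, κ₃ s t * pd1 (pd1 κ₃) s t := by
    have step := intervalIntegral.integral_congr
      (f := fun s => κ₃ s t * (pd2 κ₃ s t - (η / α) * pd1 (pd1 κ₃) s t))
      (g := fun s => κ₃ s t * pd2 κ₃ s t - (η / α) * (κ₃ s t * pd1 (pd1 κ₃) s t))
      (a := 0) (b := 1) (μ := volume) (fun s _ => by ring)
    rw [step, intervalIntegral.integral_sub II5 II6, intervalIntegral.integral_const_mul]
  -- h5 : integration by parts on the twist term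
  have h5 : (∫ s in (0:ℝ)..1, κ₃ s t * pd1 (pd1 κ₃) s t)
      = -∫ s in (0:ℝ)..1, (pd1 κ₃ s t) ^ 2 := by
    have hibp := ibp_mul (fun u => κ₃ u t) (fun u => pd1 κ₃ u t)
      (contDiff_slice1 hκ t) (contDiff_slice1 hκs t)
      (by simpa using hκper 0 t) (by simpa using hpκ 0 t)
    have hibp' : (∫ s in (0:ℝ)..1, pd1 κ₃ s t * pd1 κ₃ s t)
        = -∫ s in (0:ℝ)..1, κ₃ s t * pd1 (pd1 κ₃) s t := hibp
    have hsq : (∫ s in (0:ℝ)..1, pd1 κ₃ s t * pd1 κ₃ s t)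
        = ∫ s in (0:ℝ)..1, (pd1 κ₃ s t) ^ 2 :=
      intervalIntegral.integral_congr fun s _ => by ring
    linarith [hibp', hsq]
  -- h6 : integration by parts on the W term
  have h6 : (∫ s in (0:ℝ)..1, ⟪W s t, pd2 (pd1 X) s t⟫)
      = -∫ s in (0:ℝ)..1, ⟪pd1 W s t, pd2 X s t⟫ := by
    have hibp := ibp_inner (fun u => W u t) (fun u => pd2 X u t)
      hWf (contDiff_slice1 hXt t)
      (by simpa using hWper 0) (by simpa using hpt 0 t)
    have hibp' : (∫ s in (0:ℝ)..1, ⟪pd1 W s t, pd2 X s t⟫)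
        = -∫ s in (0:ℝ)..1, ⟪W s t, pd1 (pd2 X) s t⟫ := hibp
    have hR : (∫ s in (0:ℝ)..1, ⟪W s t, pd1 (pd2 X) s t⟫)
        = ∫ s in (0:ℝ)..1, ⟪W s t, pd2 (pd1 X) s t⟫ :=
      intervalIntegral.integral_congr fun s _ => by rw [hcomm1 s]
    linarith [hibp', hR]
  -- h7 : substitute the first PDE
  have h7 : (∫ s in (0:ℝ)..1, ⟪pd1 W s t, pd2 X s t⟫)
      = -∫ s in (0:ℝ)..1,
          (‖pd1 W s t‖ ^ 2 + γ * ⟪pd1 X s t, pd1 W s t⟫ ^ 2) := by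
    have hptw : ∀ s : ℝ, ⟪pd1 W s t, pd2 X s t⟫
        = -(‖pd1 W s t‖ ^ 2 + γ * ⟪pd1 X s t, pd1 W s t⟫ ^ 2) := by
      intro s
      rw [hPDE1' s, inner_neg_right, inner_add_right, real_inner_smul_right,
        real_inner_self_eq_norm_sq, real_inner_comm (pd1 W s t) (pd1 X s t)]
      ring
    have step := intervalIntegral.integral_congr
      (f := fun s => ⟪pd1 W s t, pd2 X s t⟫)
      (g := fun s => -(‖pd1 W s t‖ ^ 2 + γ * ⟪pd1 X s t, pd1 W s t⟫ ^ 2))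
      (a := 0) (b := 1) (μ := volume) (fun s _ => hptw s)
    rw [step, intervalIntegral.integral_neg]
  -- final assembly
  have hval : (1/2 : ℝ) * ∫ s in (0:ℝ)..1, pd2 e s t
      = -(∫ s in (0:ℝ)..1,
            (‖pd1 W s t‖ ^ 2 + γ * ⟪pd1 X s t, pd1 W s t⟫ ^ 2))
        - (η ^ 2 / α) * ∫ s in (0:ℝ)..1, (pd1 κ₃ s t) ^ 2 := by
    linear_combination (1/2 : ℝ) * h1 + h2 - h3 - η * h4 + (η^2/α) * h5 - h6 + h7
  rw [hfun_eq]
  exact hval ▸ (HasDerivAt.const_mul (1/2 : ℝ) hDUI)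
end
end
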